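/- arXiv:2512.00693 — 10 statements merged into one kernel-verified Lean document; each statement's English description precedes it below -/
import Mathlib

section
/- Let μ > 0 and c ∈ ℝ with c ≠ 0, and set s = (c + √(c² + 4μ))/2. Then s − max(c, 0) = 2μ/(√(c² + 4μ) + |c|), and in particular 0 < s − max(c, 0) ≤ min{μ/|c|, √μ}. -/
/-! Since `max c 0 = (c + |c|)/2`, the gap `s − max(c,0)` equals `(√(c² + 4μ) − |c|)/2`, and
rationalising gives `2μ/(√(c² + 4μ) + |c|)`. The denominator exceeds both `2|c|` and
`2√μ = √(4μ)`, which yields the two upper bounds. -/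

open Real

lemma max_zero_eq_add_abs_div_two (c : ℝ) : max c 0 = (c + |c|) / 2 := by
  rcases le_or_gt c 0 with h | h
  · rw [max_eq_right h, abs_of_nonpos h]; ring
  · rw [max_eq_left h.le, abs_of_pos h]; ring

lemma abs_lt_sqrt_sq_add {c a : ℝ} (ha : 0 < a) : |c| < √(c ^ 2 + a) :=
  lt_sqrt_of_sq_lt (by rw [sq_abs]; linarith)

lemma sqrt_sq_add_sub_abs {c a : ℝ} (ha : 0 < a) :
    √(c ^ 2 + a) - |c| = a / (√(c ^ 2 + a) + |c|) := by
  have hpos : 0 < √(c ^ 2 + a) + |c| := by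
    linarith [abs_lt_sqrt_sq_add (c := c) ha, abs_nonneg c]
  rw [eq_div_iff hpos.ne', mul_comm, ← sq_sub_sq, sq_sqrt (by positivity), sq_abs]
  ring

lemma two_mul_sqrt_le_sqrt_sq_add_four_mul (c μ : ℝ) :
    2 * √μ ≤ √(c ^ 2 + 4 * μ) := by
  have : 2 * √μ = √(4 * μ) := by
    rw [sqrt_mul (by norm_num), show (4 : ℝ) = 2 ^ 2 by norm_num, sqrt_sq (by norm_num)]
  rw [this]
  exact sqrt_le_sqrt (by nlinarith [sq_nonneg c])

/-- For `μ > 0` and `c ≠ 0`, with `s = (c + √(c² + 4μ))/2`: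
`s − max(c,0) = 2μ/(√(c² + 4μ) + |c|)` and `0 < s − max(c,0) ≤ min{μ/|c|, √μ}`. -/
theorem stmt1 (μ c : ℝ) (hμ : 0 < μ) (hc : c ≠ 0) :
    (c + Real.sqrt (c ^ 2 + 4 * μ)) / 2 - max c 0
        = 2 * μ / (Real.sqrt (c ^ 2 + 4 * μ) + |c|) ∧
    0 < (c + Real.sqrt (c ^ 2 + 4 * μ)) / 2 - max c 0 ∧
    (c + Real.sqrt (c ^ 2 + 4 * μ)) / 2 - max c 0 ≤ min (μ / |c|) (Real.sqrt μ) := by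
  have habs : 0 < |c| := abs_pos.mpr hc
  have hr : |c| < √(c ^ 2 + 4 * μ) := abs_lt_sqrt_sq_add (by positivity)
  have hgap : (c + √(c ^ 2 + 4 * μ)) / 2 - max c 0 = 2 * μ / (√(c ^ 2 + 4 * μ) + |c|) := by
    calc (c + √(c ^ 2 + 4 * μ)) / 2 - max c 0 = (√(c ^ 2 + 4 * μ) - |c|) / 2 := by
          rw [max_zero_eq_add_abs_div_two]; ring
      _ = 2 * μ / (√(c ^ 2 + 4 * μ) + |c|) := by
          rw [sqrt_sq_add_sub_abs (by positivity)]; ring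
  refine ⟨hgap, hgap ▸ by positivity, ?_⟩
  rw [hgap, le_min_iff]
  constructor
  · calc 2 * μ / (√(c ^ 2 + 4 * μ) + |c|) ≤ 2 * μ / (2 * |c|) := by
          gcongr; linarith
      _ = μ / |c| := by field_simp
  · calc 2 * μ / (√(c ^ 2 + 4 * μ) + |c|) ≤ 2 * μ / (2 * √μ) := by
          gcongr; linarith [two_mul_sqrt_le_sqrt_sq_add_four_mul c μ, abs_nonneg c]
      _ = √μ := by rw [mul_div_mul_left _ _ two_ne_zero, div_sqrt]
end

section
/- For every μ > 0 and every c ∈ ℝⁿ (n ≥ 2), the function f_μ(s) = (1/2)‖s − c‖² − (μ/2) log(s₀² − ‖s₁‖²), defined for s = (s₀, s₁) in the interior of the second-order cone K_soc^n, has a unique minimizer. -/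
/-!
The minimizer is found explicitly rather than by compactness. Writing `det s = s₀² − ‖s₁‖²`, the
stationarity equation of `f_μ` reads `c = s − μ s⁻¹` with `s⁻¹ = (s₀, −s₁) / det s` the inverse of
`s` in the Jordan algebra of the cone, and it is solved spectrally: the eigenvalues `r₁, r₂ > 0`
of `s` solve `r − μ / r = c₀ ± ‖c₁‖`. Concavity of `log det`, in the form of the Lorentz
Cauchy–Schwarz inequality `√(det x · det y) ≤ x₀ y₀ − ⟪x₁, y₁⟫`, then shows that a stationary
point `x` satisfies `f_μ(x) + ‖y − x‖² / 2 ≤ f_μ(y)` on the whole interior of the cone, which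
gives both minimality and uniqueness.
-/

/-- The smoothing objective for the second-order cone `K_soc^{p+1}`:
`f_μ(s) = (1/2)‖s − c‖² − (μ/2) log(s₀² − ‖s₁‖²)`, where a point of `ℝⁿ`
(`n = p + 1`) is represented as a pair `(s₀, s₁) ∈ ℝ × ℝᵖ` and
`‖s − c‖² = (s₀ − c₀)² + ‖s₁ − c₁‖²` is the Euclidean norm squared. -/
noncomputable def socObj (p : ℕ) (μ : ℝ) (c s : ℝ × EuclideanSpace ℝ (Fin p)) : ℝ :=
  (1 / 2) * ((s.1 - c.1) ^ 2 + ‖s.2 - c.2‖ ^ 2) - (μ / 2) * Real.log (s.1 ^ 2 - ‖s.2‖ ^ 2)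

open Real
open scoped InnerProductSpace

section LorentzCone

variable {E : Type*} [NormedAddCommGroup E]

def socDet (s : ℝ × E) : ℝ := s.1 ^ 2 - ‖s.2‖ ^ 2

lemma socDet_pos {s : ℝ × E} (hs : ‖s.2‖ < s.1) : 0 < socDet s := by
  unfold socDet
  nlinarith [norm_nonneg s.2]

variable [InnerProductSpace ℝ E]

lemma sqrt_socDet_mul_le {x y : ℝ × E} (hx : ‖x.2‖ ≤ x.1) (hy : ‖y.2‖ ≤ y.1) :
    √(socDet x * socDet y) ≤ x.1 * y.1 - ⟪x.2, y.2⟫_ℝ := by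
  have hinner : ⟪x.2, y.2⟫_ℝ ≤ ‖x.2‖ * ‖y.2‖ := real_inner_le_norm x.2 y.2
  have hnorms : ‖x.2‖ * ‖y.2‖ ≤ x.1 * y.1 :=
    mul_le_mul hx hy (norm_nonneg _) ((norm_nonneg _).trans hx)
  calc √(socDet x * socDet y) ≤ x.1 * y.1 - ‖x.2‖ * ‖y.2‖ := by
        rw [sqrt_le_left (by linarith)]
        unfold socDet
        nlinarith [sq_nonneg (x.1 * ‖y.2‖ - y.1 * ‖x.2‖)]
    _ ≤ x.1 * y.1 - ⟪x.2, y.2⟫_ℝ := by linarith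

lemma log_socDet_le {x y : ℝ × E} (hx : ‖x.2‖ < x.1) (hy : ‖y.2‖ < y.1) :
    log (socDet y) ≤ log (socDet x) + 2 * ((x.1 * y.1 - ⟪x.2, y.2⟫_ℝ) / socDet x - 1) := by
  have hdx := socDet_pos hx
  have hdy := socDet_pos hy
  have hlog : log √(socDet x * socDet y) - log (socDet x)
      ≤ √(socDet x * socDet y) / socDet x - 1 := by
    rw [← log_div (by positivity) hdx.ne']
    exact log_le_sub_one_of_pos (by positivity)
  rw [log_sqrt (by positivity), log_mul hdx.ne' hdy.ne'] at hlog
  have hratio : √(socDet x * socDet y) / socDet x ≤ (x.1 * y.1 - ⟪x.2, y.2⟫_ℝ) / socDet x :=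
    div_le_div_of_nonneg_right (sqrt_socDet_mul_le hx.le hy.le) hdx.le
  linarith

lemma exists_pos_sq_eq_mul_add {μ : ℝ} (hμ : 0 < μ) (t : ℝ) : ∃ r > 0, r ^ 2 = t * r + μ := by
  have hroot : |t| < √(t ^ 2 + 4 * μ) := by
    rw [← sqrt_sq_eq_abs]
    exact sqrt_lt_sqrt (sq_nonneg t) (by linarith)
  have hsq : √(t ^ 2 + 4 * μ) ^ 2 = t ^ 2 + 4 * μ := sq_sqrt (by positivity)
  refine ⟨(t + √(t ^ 2 + 4 * μ)) / 2, by linarith [neg_abs_le t], ?_⟩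
  linear_combination hsq / 4

lemma exists_socStationary {μ : ℝ} (hμ : 0 < μ) (c : ℝ × E) :
    ∃ x : ℝ × E, ‖x.2‖ < x.1 ∧
      c.1 = x.1 - μ * x.1 / socDet x ∧ c.2 = x.2 + (μ / socDet x) • x.2 := by
  by_cases hc : c.2 = 0
  · obtain ⟨r, hr, hroot⟩ := exists_pos_sq_eq_mul_add hμ c.1
    have hdet : socDet ((r, 0) : ℝ × E) = r ^ 2 := by simp [socDet]
    refine ⟨(r, 0), by simpa using hr, ?_, by simp [hc]⟩
    rw [hdet]
    field_simp
    linear_combination -hroot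
  have hn : 0 < ‖c.2‖ := norm_pos_iff.mpr hc
  obtain ⟨r₁, hr₁, hroot₁⟩ := exists_pos_sq_eq_mul_add hμ (c.1 + ‖c.2‖)
  obtain ⟨r₂, hr₂, hroot₂⟩ := exists_pos_sq_eq_mul_add hμ (c.1 - ‖c.2‖)
  -- `x` has eigenvalues `r₁, r₂` along the Jordan frame `(1, ±c₁ / ‖c₁‖) / 2` of `c`.
  set x : ℝ × E := ((r₁ + r₂) / 2, ((r₁ - r₂) / (2 * ‖c.2‖)) • c.2)
  have hnorm : ‖x.2‖ = |r₁ - r₂| / 2 := by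
    simp only [x, norm_smul, norm_div, Real.norm_eq_abs, abs_mul, abs_two, abs_of_pos hn]
    field_simp
  have hdet : socDet x = r₁ * r₂ := by
    simp only [socDet, hnorm, div_pow, sq_abs]
    ring
  refine ⟨x, ?_, ?_, ?_⟩
  · rw [hnorm]
    exact div_lt_div_of_pos_right (abs_sub_lt_iff.mpr ⟨by linarith, by linarith⟩) two_pos
  · rw [hdet]
    field_simp
    linear_combination -(r₂ * hroot₁ + r₁ * hroot₂) / 2
  · have hscalar : (r₁ - r₂) / (2 * ‖c.2‖) + μ / (r₁ * r₂) * ((r₁ - r₂) / (2 * ‖c.2‖)) = 1 := by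
      field_simp
      linear_combination r₂ * hroot₁ - r₁ * hroot₂
    rw [hdet]
    dsimp only [x]
    rw [smul_smul, ← add_smul, hscalar, one_smul]

end LorentzCone

lemma socObj_add_half_sq_le {p : ℕ} {μ : ℝ} (hμ : 0 ≤ μ) {c x y : ℝ × EuclideanSpace ℝ (Fin p)}
    (hx : ‖x.2‖ < x.1) (h₁ : c.1 = x.1 - μ * x.1 / socDet x)
    (h₂ : c.2 = x.2 + (μ / socDet x) • x.2) (hy : ‖y.2‖ < y.1) :
    socObj p μ c x + ((y.1 - x.1) ^ 2 + ‖y.2 - x.2‖ ^ 2) / 2 ≤ socObj p μ c y := by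
  have hdx := socDet_pos hx
  set ℓ := (x.1 * y.1 - ⟪x.2, y.2⟫_ℝ) / socDet x - 1
  have hsplit₁ : (y.1 - c.1) ^ 2
      = (x.1 - c.1) ^ 2 + 2 * ((x.1 - c.1) * (y.1 - x.1)) + (y.1 - x.1) ^ 2 := by ring
  have hsplit₂ : ‖y.2 - c.2‖ ^ 2
      = ‖x.2 - c.2‖ ^ 2 + 2 * ⟪x.2 - c.2, y.2 - x.2⟫_ℝ + ‖y.2 - x.2‖ ^ 2 := by
    rw [← norm_add_sq_real, sub_add_sub_cancel']
  -- by stationarity the linear term of the quadratic part cancels the one of `log_socDet_le`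
  have hcross : (x.1 - c.1) * (y.1 - x.1) + ⟪x.2 - c.2, y.2 - x.2⟫_ℝ = μ * ℓ := by
    rw [h₁, h₂, sub_add_cancel_left, inner_neg_left, real_inner_smul_left, inner_sub_right,
      real_inner_self_eq_norm_sq]
    simp only [ℓ, socDet] at hdx ⊢
    field_simp
    ring
  have hlog := mul_le_mul_of_nonneg_left (log_socDet_le hx hy) (by positivity : (0:ℝ) ≤ μ / 2)
  unfold socObj
  change _ - μ / 2 * log (socDet x) + _ ≤ _ - μ / 2 * log (socDet y)
  linarith

theorem stmt2_general (p : ℕ) (μ : ℝ) (hμ : 0 < μ)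
    (c : ℝ × EuclideanSpace ℝ (Fin p)) :
    ∃! s0 : ℝ × EuclideanSpace ℝ (Fin p),
      ‖s0.2‖ < s0.1 ∧
      ∀ s : ℝ × EuclideanSpace ℝ (Fin p), ‖s.2‖ < s.1 →
        socObj p μ c s0 ≤ socObj p μ c s := by
  obtain ⟨x, hx, h₁, h₂⟩ := exists_socStationary hμ c
  have hgap := fun (y : ℝ × EuclideanSpace ℝ (Fin p)) (hy : ‖y.2‖ < y.1) ↦
    socObj_add_half_sq_le hμ.le hx h₁ h₂ hy
  refine ⟨x, ⟨hx, fun y hy => ?_⟩, fun y ⟨hy, hmin⟩ => ?_⟩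
  · nlinarith [hgap y hy, norm_nonneg (y.2 - x.2)]
  · have hzero : (y.1 - x.1) ^ 2 + ‖y.2 - x.2‖ ^ 2 = 0 := by
      nlinarith [hgap y hy, hmin x hx, sq_nonneg (y.1 - x.1), sq_nonneg ‖y.2 - x.2‖]
    rw [add_eq_zero_iff_of_nonneg (sq_nonneg _) (sq_nonneg _), sq_eq_zero_iff, sq_eq_zero_iff,
      sub_eq_zero, norm_eq_zero, sub_eq_zero] at hzero
    exact Prod.ext hzero.1 hzero.2

/-- For every `μ > 0` and `c ∈ ℝⁿ` (`n = p + 1 ≥ 2`), the function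
`f_μ(s) = (1/2)‖s − c‖² − (μ/2) log(s₀² − ‖s₁‖²)`, defined for `s = (s₀, s₁)` in the
interior of the second-order cone (i.e. `‖s₁‖ < s₀`), has a unique minimizer. -/
theorem stmt2 (p : ℕ) (hp : 1 ≤ p) (μ : ℝ) (hμ : 0 < μ)
    (c : ℝ × EuclideanSpace ℝ (Fin p)) :
    ∃! s0 : ℝ × EuclideanSpace ℝ (Fin p),
      ‖s0.2‖ < s0.1 ∧
      ∀ s : ℝ × EuclideanSpace ℝ (Fin p), ‖s.2‖ < s.1 →
        socObj p μ c s0 ≤ socObj p μ c s :=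
  stmt2_general p μ hμ c
end

section
/- Let μ > 0 and c = (0, c₁) ∈ ℝ × ℝ^{n−1}. Then the point s = (√(μ + ‖c₁‖²/4), c₁/2) lies in the interior of K_soc^n, satisfies s₀² − ‖s₁‖² = μ, and is the unique minimizer over the interior of K_soc^n of f_μ(s) = (1/2)‖s − c‖² − (μ/2) log(s₀² − ‖s₁‖²); equivalently it satisfies the optimality condition −(μ/(s₀² − ‖s₁‖²))·(s₀, −s₁) + s − c = 0. -/
/-!
Write `q(s) = s₀² − ‖s₁‖²`. For `c = (0, c₁)` the parallelogram law turns the objective into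
`f_μ(s) = (q(s) − μ log q(s)) / 2 + ‖s₁ − c₁/2‖² + ‖c₁‖² / 4`.
By `log x ≤ x − 1`, with equality only at `x = 1`, the first summand is minimised over `q > 0`
exactly at `q = μ`; the second vanishes exactly at `s₁ = c₁/2`. Inside the cone these two
conditions determine `s`.
-/

open Real

theorem self_sub_mul_log_self_lt {μ q : ℝ} (hμ : 0 < μ) (hq : 0 < q) (hne : q ≠ μ) :
    μ - μ * log μ < q - μ * log q := by
  have hlog := log_lt_sub_one_of_pos (div_pos hq hμ) (mt (div_eq_one_iff_eq hμ.ne').1 hne)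
  rw [log_div hq.ne' hμ.ne', lt_sub_iff_add_lt, ← mul_lt_mul_iff_right₀ hμ,
    mul_div_cancel₀ q hμ.ne'] at hlog
  linarith

theorem self_sub_mul_log_self_le {μ q : ℝ} (hμ : 0 < μ) (hq : 0 < q) :
    μ - μ * log μ ≤ q - μ * log q := by
  rcases eq_or_ne q μ with rfl | hne
  · exact le_rfl
  · exact (self_sub_mul_log_self_lt hμ hq hne).le

theorem norm_half_smul_sq {F : Type*} [SeminormedAddCommGroup F] [NormedSpace ℝ F] (x : F) :
    ‖(1 / 2 : ℝ) • x‖ ^ 2 = ‖x‖ ^ 2 / 4 := by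
  rw [norm_smul, mul_pow]
  norm_num
  ring

section Center

variable {E : Type*} [NormedAddCommGroup E] [InnerProductSpace ℝ E]

theorem norm_sub_sq_add_norm_sq (x c : E) :
    ‖x - c‖ ^ 2 + ‖x‖ ^ 2 = 2 * ‖x - (1 / 2 : ℝ) • c‖ ^ 2 + ‖c‖ ^ 2 / 2 := by
  have h := parallelogram_law_with_norm ℝ (x - (1 / 2 : ℝ) • c) ((1 / 2 : ℝ) • c)
  rw [sub_add_cancel, sub_sub, ← add_smul, norm_half_smul_sq] at h
  norm_num at h
  linarith

noncomputable def socCenter (μ : ℝ) (c₁ : E) : ℝ × E :=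
  (√(μ + ‖c₁‖ ^ 2 / 4), (1 / 2 : ℝ) • c₁)

variable {μ : ℝ}

theorem socCenter_fst_sq_sub (hμ : 0 ≤ μ) (c₁ : E) :
    (socCenter μ c₁).1 ^ 2 - ‖(socCenter μ c₁).2‖ ^ 2 = μ := by
  rw [socCenter, sq_sqrt (by positivity), norm_half_smul_sq]
  ring

theorem norm_snd_lt_socCenter_fst (hμ : 0 < μ) (c₁ : E) :
    ‖(socCenter μ c₁).2‖ < (socCenter μ c₁).1 :=
  lt_of_pow_lt_pow_left₀ 2 (sqrt_nonneg _) (by linarith [socCenter_fst_sq_sub hμ.le c₁])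

theorem eq_socCenter {c₁ : E} {s : ℝ × E} (hs : 0 ≤ s.1)
    (hq : s.1 ^ 2 - ‖s.2‖ ^ 2 = μ) (h₂ : s.2 = (1 / 2 : ℝ) • c₁) : s = socCenter μ c₁ := by
  rw [h₂, norm_half_smul_sq] at hq
  refine Prod.ext ?_ h₂
  rw [socCenter, ← hq, sub_add_cancel, sqrt_sq hs]

theorem socCenter_optimality (hμ : 0 < μ) (c₁ : E) :
    (-(μ / ((socCenter μ c₁).1 ^ 2 - ‖(socCenter μ c₁).2‖ ^ 2))) •
        ((socCenter μ c₁).1, -(socCenter μ c₁).2) + socCenter μ c₁ - (0, c₁) = 0 := by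
  rw [socCenter_fst_sq_sub hμ.le, div_self hμ.ne']
  ext
  · simp
  · simp only [socCenter, Prod.snd_sub, Prod.snd_add, Prod.smul_snd, Prod.snd_zero]
    module

end Center

variable {p : ℕ} {μ : ℝ}

theorem socObj_zero_fst (c₁ : EuclideanSpace ℝ (Fin p)) (s : ℝ × EuclideanSpace ℝ (Fin p)) :
    socObj p μ (0, c₁) s =
      ((s.1 ^ 2 - ‖s.2‖ ^ 2) - μ * log (s.1 ^ 2 - ‖s.2‖ ^ 2)) / 2
        + ‖s.2 - (1 / 2 : ℝ) • c₁‖ ^ 2 + ‖c₁‖ ^ 2 / 4 := by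
  have h := norm_sub_sq_add_norm_sq s.2 c₁
  rw [socObj, sub_zero]
  linarith

theorem socObj_socCenter_lt (hμ : 0 < μ) (c₁ : EuclideanSpace ℝ (Fin p))
    {s : ℝ × EuclideanSpace ℝ (Fin p)} (hs : ‖s.2‖ < s.1) (hne : s ≠ socCenter μ c₁) :
    socObj p μ (0, c₁) (socCenter μ c₁) < socObj p μ (0, c₁) s := by
  have hq : 0 < s.1 ^ 2 - ‖s.2‖ ^ 2 := by nlinarith [norm_nonneg s.2]
  rw [socObj_zero_fst, socObj_zero_fst, socCenter_fst_sq_sub hμ.le]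
  simp only [socCenter, sub_self, norm_zero]
  by_cases h₂ : s.2 = (1 / 2 : ℝ) • c₁
  · have hqμ : s.1 ^ 2 - ‖s.2‖ ^ 2 ≠ μ := fun h ↦
      hne (eq_socCenter ((norm_nonneg _).trans hs.le) h h₂)
    have := self_sub_mul_log_self_lt hμ hq hqμ
    rw [sub_eq_zero.2 h₂, norm_zero]
    linarith
  · have h₂pos : 0 < ‖s.2 - (1 / 2 : ℝ) • c₁‖ ^ 2 :=
      pow_pos (norm_pos_iff.2 (sub_ne_zero.2 h₂)) 2
    have := self_sub_mul_log_self_le hμ hq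
    linarith

/-- For `μ > 0` and `c = (0, c₁)`, the point `s = (√(μ + ‖c₁‖²/4), c₁/2)` lies in the
interior of the second-order cone, satisfies `s₀² − ‖s₁‖² = μ`, is the unique minimizer
of `f_μ` over the interior of the cone, and satisfies the optimality condition
`−(μ/(s₀² − ‖s₁‖²))·(s₀, −s₁) + s − c = 0`. -/
theorem stmt3 (p : ℕ) (μ : ℝ) (hμ : 0 < μ) (c₁ : EuclideanSpace ℝ (Fin p)) :
    let c : ℝ × EuclideanSpace ℝ (Fin p) := (0, c₁)
    let s0 : ℝ × EuclideanSpace ℝ (Fin p) :=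
      (Real.sqrt (μ + ‖c₁‖ ^ 2 / 4), (1 / 2 : ℝ) • c₁)
    ‖s0.2‖ < s0.1 ∧
    s0.1 ^ 2 - ‖s0.2‖ ^ 2 = μ ∧
    (∀ s : ℝ × EuclideanSpace ℝ (Fin p), ‖s.2‖ < s.1 →
      socObj p μ c s0 ≤ socObj p μ c s) ∧
    (∀ s : ℝ × EuclideanSpace ℝ (Fin p), ‖s.2‖ < s.1 →
      (∀ s' : ℝ × EuclideanSpace ℝ (Fin p), ‖s'.2‖ < s'.1 →
        socObj p μ c s ≤ socObj p μ c s') → s = s0) ∧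
    (-(μ / (s0.1 ^ 2 - ‖s0.2‖ ^ 2))) • ((s0.1, -s0.2) : ℝ × EuclideanSpace ℝ (Fin p))
        + s0 - c = 0 := by
  intro c s0
  have hin : ‖s0.2‖ < s0.1 := norm_snd_lt_socCenter_fst hμ c₁
  refine ⟨hin, socCenter_fst_sq_sub hμ.le c₁, fun s hs => ?_, fun s hs hmin => ?_,
    socCenter_optimality hμ c₁⟩
  · rcases eq_or_ne s s0 with rfl | hne
    · exact le_rfl
    · exact (socObj_socCenter_lt hμ c₁ hs hne).le
  · by_contra hne
    exact (hmin s0 hin).not_gt (socObj_socCenter_lt hμ c₁ hs hne)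
end

section
/- Let μ > 0 and c = (c₀, c₁) ∈ ℝ × ℝ^{n−1} with c₀ ≠ 0. Define a = (c₀² − ‖c₁‖²)/μ and γ = (a + √(a² + 8(c₀² + ‖c₁‖²)/μ + 16))/2. Then γ > 2. Moreover, setting ρ = (γ + √(γ² − 4))/2 if c₀ > 0 and ρ = (γ − √(γ² − 4))/2 if c₀ < 0, one has ρ > 1 in the first case and 0 < ρ < 1 in the second case, and the point s with s₀ = ρ c₀/(ρ − 1) and s₁ = ρ c₁/(ρ + 1) lies in the interior of K_soc^n, satisfies s₀² − ‖s₁‖² = ρμ, and is the unique minimizer over the interior of K_soc^n of f_μ(s) = (1/2)‖s − c‖² − (μ/2) log(s₀² − ‖s₁‖²). -/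
open Real
open scoped InnerProductSpace

noncomputable def scalarObj (μ β t : ℝ) : ℝ := (t - β) ^ 2 / 4 - μ / 2 * log t

theorem scalarObj_add_sq_le {μ β t₀ t : ℝ} (hμ : 0 ≤ μ) (ht₀ : 0 < t₀) (ht : 0 < t)
    (hroot : t₀ ^ 2 - β * t₀ - μ = 0) :
    scalarObj μ β t₀ + (t - t₀) ^ 2 / 4 ≤ scalarObj μ β t := by
  have hlog : log t - log t₀ ≤ (t - t₀) / t₀ := by
    rw [← log_div ht.ne' ht₀.ne', sub_div, div_self ht₀.ne']
    exact log_le_sub_one_of_pos (div_pos ht ht₀)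
  have hμlog : μ / 2 * (log t - log t₀) ≤ (t₀ - β) * (t - t₀) / 2 :=
    calc μ / 2 * (log t - log t₀) ≤ μ / 2 * ((t - t₀) / t₀) := by gcongr
      _ = (t₀ - β) * (t - t₀) / 2 := by
        rw [show μ = t₀ * (t₀ - β) by linear_combination -hroot]
        field_simp
  unfold scalarObj
  nlinarith [hμlog]

theorem eq_smul_of_inner_eq_norm_mul {E : Type*} [NormedAddCommGroup E] [InnerProductSpace ℝ E]
    {v c : E} {κ : ℝ} (hinner : ⟪v, c⟫_ℝ = ‖v‖ * ‖c‖) (hnorm : ‖v‖ = κ * ‖c‖) : v = κ • c := by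
  rw [← sub_eq_zero, ← norm_eq_zero, ← sq_eq_zero_iff, norm_sub_sq_real, real_inner_smul_right,
    norm_smul, Real.norm_eq_abs, mul_pow, sq_abs, hinner, hnorm]
  ring

section SecondOrderCone

variable {p : ℕ} {μ c₀ : ℝ} {c₁ : EuclideanSpace ℝ (Fin p)}

theorem socObj_eq_scalarObj_add {s : ℝ × EuclideanSpace ℝ (Fin p)} (hs : ‖s.2‖ < s.1) :
    socObj p μ (c₀, c₁) s = scalarObj μ (c₀ - ‖c₁‖) (s.1 - ‖s.2‖)
      + scalarObj μ (c₀ + ‖c₁‖) (s.1 + ‖s.2‖) + (‖s.2‖ * ‖c₁‖ - ⟪s.2, c₁⟫_ℝ) := by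
  have hu : 0 < s.1 - ‖s.2‖ := by linarith
  have hv : 0 < s.1 + ‖s.2‖ := by linarith [norm_nonneg s.2]
  have hlog : log (s.1 ^ 2 - ‖s.2‖ ^ 2) = log (s.1 - ‖s.2‖) + log (s.1 + ‖s.2‖) := by
    rw [← log_mul hu.ne' hv.ne']
    ring_nf
  simp only [socObj, scalarObj, hlog, norm_sub_sq_real]
  ring

variable {x κ : ℝ}

theorem socObj_add_le (hμ : 0 ≤ μ) (hκ : 0 ≤ κ) (hx : κ * ‖c₁‖ < x)
    (hu : (x - κ * ‖c₁‖) ^ 2 - (c₀ - ‖c₁‖) * (x - κ * ‖c₁‖) - μ = 0)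
    (hv : (x + κ * ‖c₁‖) ^ 2 - (c₀ + ‖c₁‖) * (x + κ * ‖c₁‖) - μ = 0)
    {s : ℝ × EuclideanSpace ℝ (Fin p)} (hs : ‖s.2‖ < s.1) :
    socObj p μ (c₀, c₁) (x, κ • c₁) + ((s.1 - ‖s.2‖) - (x - κ * ‖c₁‖)) ^ 2 / 4
      + ((s.1 + ‖s.2‖) - (x + κ * ‖c₁‖)) ^ 2 / 4 + (‖s.2‖ * ‖c₁‖ - ⟪s.2, c₁⟫_ℝ)
      ≤ socObj p μ (c₀, c₁) s := by
  have hnorm : ‖κ • c₁‖ = κ * ‖c₁‖ := by rw [norm_smul, norm_of_nonneg hκ]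
  have hcone : ‖(x, κ • c₁).2‖ < (x, κ • c₁).1 := by simpa only [hnorm] using hx
  have haligned : ‖κ • c₁‖ * ‖c₁‖ - ⟪κ • c₁, c₁⟫_ℝ = 0 := by
    rw [hnorm, real_inner_smul_left, real_inner_self_eq_norm_sq]
    ring
  have hy : 0 ≤ κ * ‖c₁‖ := mul_nonneg hκ (norm_nonneg c₁)
  have hφu := scalarObj_add_sq_le hμ (by linarith) (by linarith) hu (t := s.1 - ‖s.2‖)
  have hφv := scalarObj_add_sq_le hμ (by linarith) (by linarith [norm_nonneg s.2]) hv
    (t := s.1 + ‖s.2‖)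
  rw [socObj_eq_scalarObj_add hcone, socObj_eq_scalarObj_add hs]
  dsimp only
  rw [haligned, hnorm]
  linarith

theorem socObj_le_of_roots (hμ : 0 ≤ μ) (hκ : 0 ≤ κ) (hx : κ * ‖c₁‖ < x)
    (hu : (x - κ * ‖c₁‖) ^ 2 - (c₀ - ‖c₁‖) * (x - κ * ‖c₁‖) - μ = 0)
    (hv : (x + κ * ‖c₁‖) ^ 2 - (c₀ + ‖c₁‖) * (x + κ * ‖c₁‖) - μ = 0)
    {s : ℝ × EuclideanSpace ℝ (Fin p)} (hs : ‖s.2‖ < s.1) :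
    socObj p μ (c₀, c₁) (x, κ • c₁) ≤ socObj p μ (c₀, c₁) s := by
  have := socObj_add_le hμ hκ hx hu hv hs
  linarith [real_inner_le_norm s.2 c₁, sq_nonneg ((s.1 - ‖s.2‖) - (x - κ * ‖c₁‖)),
    sq_nonneg ((s.1 + ‖s.2‖) - (x + κ * ‖c₁‖))]

theorem eq_of_socObj_le_of_roots (hμ : 0 ≤ μ) (hκ : 0 ≤ κ) (hx : κ * ‖c₁‖ < x)
    (hu : (x - κ * ‖c₁‖) ^ 2 - (c₀ - ‖c₁‖) * (x - κ * ‖c₁‖) - μ = 0)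
    (hv : (x + κ * ‖c₁‖) ^ 2 - (c₀ + ‖c₁‖) * (x + κ * ‖c₁‖) - μ = 0)
    {s : ℝ × EuclideanSpace ℝ (Fin p)} (hs : ‖s.2‖ < s.1)
    (hle : socObj p μ (c₀, c₁) s ≤ socObj p μ (c₀, c₁) (x, κ • c₁)) : s = (x, κ • c₁) := by
  have hsum := socObj_add_le hμ hκ hx hu hv hs
  have hinner := real_inner_le_norm s.2 c₁
  have hdu := sq_nonneg ((s.1 - ‖s.2‖) - (x - κ * ‖c₁‖))
  have hdv := sq_nonneg ((s.1 + ‖s.2‖) - (x + κ * ‖c₁‖))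
  have hu_eq : s.1 - ‖s.2‖ = x - κ * ‖c₁‖ :=
    sub_eq_zero.1 (sq_eq_zero_iff.1 (by linarith))
  have hv_eq : s.1 + ‖s.2‖ = x + κ * ‖c₁‖ :=
    sub_eq_zero.1 (sq_eq_zero_iff.1 (by linarith))
  exact Prod.ext (by linarith) (eq_smul_of_inner_eq_norm_mul (by linarith) (by linarith))

end SecondOrderCone

noncomputable def socGamma (μ c₀ r : ℝ) : ℝ :=
  let a : ℝ := (c₀ ^ 2 - r ^ 2) / μ
  (a + √(a ^ 2 + 8 * (c₀ ^ 2 + r ^ 2) / μ + 16)) / 2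

noncomputable def socRho (γ c₀ : ℝ) : ℝ :=
  if 0 < c₀ then (γ + √(γ ^ 2 - 4)) / 2 else (γ - √(γ ^ 2 - 4)) / 2

section Parameters

variable {μ c₀ r γ ρ : ℝ}

theorem socGamma_key (hμ : 0 < μ) :
    μ * (socGamma μ c₀ r ^ 2 - 4)
      = c₀ ^ 2 * (socGamma μ c₀ r + 2) - r ^ 2 * (socGamma μ c₀ r - 2) := by
  unfold socGamma
  set a := (c₀ ^ 2 - r ^ 2) / μ with ha
  set S := √(a ^ 2 + 8 * (c₀ ^ 2 + r ^ 2) / μ + 16)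
  have hsq : μ * S ^ 2 = μ * a ^ 2 + 8 * (c₀ ^ 2 + r ^ 2) + 16 * μ := by
    rw [sq_sqrt (by positivity)]
    field_simp
  have haμ : a * μ = c₀ ^ 2 - r ^ 2 := by
    rw [ha]
    field_simp
  linear_combination (1 / 4) * hsq + ((a + S) / 2) * haμ

theorem two_lt_socGamma (hμ : 0 < μ) (hc₀ : c₀ ≠ 0) : 2 < socGamma μ c₀ r := by
  set a := (c₀ ^ 2 - r ^ 2) / μ with ha
  suffices 4 - a < √(a ^ 2 + 8 * (c₀ ^ 2 + r ^ 2) / μ + 16) by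
    unfold socGamma
    linarith
  rcases lt_or_ge (4 - a) 0 with hneg | hnonneg
  · exact hneg.trans_le (sqrt_nonneg _)
  rw [lt_sqrt hnonneg]
  have hc : 0 < c₀ ^ 2 / μ := by positivity
  have hgap : 8 * (c₀ ^ 2 + r ^ 2) / μ + 8 * a = 16 * (c₀ ^ 2 / μ) := by
    rw [ha]
    field_simp
    ring
  linarith

theorem socRho_spec (hγ : 2 < γ) (hc₀ : c₀ ≠ 0) :
    0 < socRho γ c₀ ∧ socRho γ c₀ * (γ - socRho γ c₀) = 1 ∧ 0 < c₀ * (socRho γ c₀ - 1) := by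
  have hsq := sq_sqrt (by nlinarith : 0 ≤ γ ^ 2 - 4)
  have hprod : (γ + √(γ ^ 2 - 4)) / 2 * ((γ - √(γ ^ 2 - 4)) / 2) = 1 := by
    linear_combination (-1 / 4) * hsq
  have hbig : 1 < (γ + √(γ ^ 2 - 4)) / 2 := by linarith [sqrt_nonneg (γ ^ 2 - 4)]
  unfold socRho
  split_ifs with hpos
  · exact ⟨by linarith, by linear_combination hprod, mul_pos hpos (by linarith)⟩
  · have hneg : c₀ < 0 := lt_of_le_of_ne (not_lt.1 hpos) hc₀
    refine ⟨by nlinarith, by linear_combination hprod, mul_pos_of_neg_of_neg hneg (by nlinarith)⟩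

theorem sq_sub_sq_eq_mul (hρ : 0 < ρ) (hρ1 : ρ - 1 ≠ 0) (hργ : ρ * (γ - ρ) = 1)
    (hγ : μ * (γ ^ 2 - 4) = c₀ ^ 2 * (γ + 2) - r ^ 2 * (γ - 2)) :
    (ρ * c₀ / (ρ - 1)) ^ 2 - (ρ / (ρ + 1) * r) ^ 2 = ρ * μ := by
  have hρ1' : ρ + 1 ≠ 0 := by positivity
  have hA : ρ * (γ + 2) = (ρ + 1) ^ 2 := by linear_combination hργ
  have hB : ρ * (γ - 2) = (ρ - 1) ^ 2 := by linear_combination hργ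
  have hC : ρ ^ 2 * (γ ^ 2 - 4) = (ρ ^ 2 - 1) ^ 2 := by
    linear_combination (ρ * γ + ρ ^ 2 + 1) * hργ
  field_simp
  linear_combination (-(ρ * c₀ ^ 2)) * hA + (ρ * r ^ 2) * hB + μ * hC - ρ ^ 2 * hγ

theorem quadratic_roots_of_sq_sub_sq {x y : ℝ} (hρ : ρ ≠ 0) (hx : x * (ρ - 1) = ρ * c₀)
    (hy : y * (ρ + 1) = ρ * r) (hxy : x ^ 2 - y ^ 2 = ρ * μ) :
    (x - y) ^ 2 - (c₀ - r) * (x - y) - μ = 0 ∧ (x + y) ^ 2 - (c₀ + r) * (x + y) - μ = 0 := by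
  constructor
  · refine mul_left_cancel₀ hρ ?_
    linear_combination (x - y) * hx - (x - y) * hy + hxy
  · refine mul_left_cancel₀ hρ ?_
    linear_combination (x + y) * hx + (x + y) * hy + hxy

end Parameters

/-- For `μ > 0` and `c = (c₀, c₁)` with `c₀ ≠ 0`, with
`a = (c₀² − ‖c₁‖²)/μ`, `γ = (a + √(a² + 8(c₀² + ‖c₁‖²)/μ + 16))/2`, one has `γ > 2`;
with `ρ = (γ + √(γ² − 4))/2` if `c₀ > 0` and `ρ = (γ − √(γ² − 4))/2` if `c₀ < 0`,
one has `ρ > 1` in the first case and `0 < ρ < 1` in the second, and the point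
`s = (ρc₀/(ρ−1), ρ/(ρ+1) • c₁)` lies in the interior of the second-order cone,
satisfies `s₀² − ‖s₁‖² = ρμ`, and is the unique minimizer of `f_μ` over the
interior of the cone. -/
theorem stmt4 (p : ℕ) (μ : ℝ) (hμ : 0 < μ) (c₀ : ℝ) (hc₀ : c₀ ≠ 0)
    (c₁ : EuclideanSpace ℝ (Fin p)) :
    let a : ℝ := (c₀ ^ 2 - ‖c₁‖ ^ 2) / μ
    let γ : ℝ := (a + Real.sqrt (a ^ 2 + 8 * (c₀ ^ 2 + ‖c₁‖ ^ 2) / μ + 16)) / 2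
    let ρ : ℝ :=
      if 0 < c₀ then (γ + Real.sqrt (γ ^ 2 - 4)) / 2 else (γ - Real.sqrt (γ ^ 2 - 4)) / 2
    let s0 : ℝ × EuclideanSpace ℝ (Fin p) := (ρ * c₀ / (ρ - 1), (ρ / (ρ + 1)) • c₁)
    2 < γ ∧
    (0 < c₀ → 1 < ρ) ∧
    (c₀ < 0 → 0 < ρ ∧ ρ < 1) ∧
    ‖s0.2‖ < s0.1 ∧
    s0.1 ^ 2 - ‖s0.2‖ ^ 2 = ρ * μ ∧
    (∀ s : ℝ × EuclideanSpace ℝ (Fin p), ‖s.2‖ < s.1 →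
      socObj p μ (c₀, c₁) s0 ≤ socObj p μ (c₀, c₁) s) ∧
    (∀ s : ℝ × EuclideanSpace ℝ (Fin p), ‖s.2‖ < s.1 →
      (∀ s' : ℝ × EuclideanSpace ℝ (Fin p), ‖s'.2‖ < s'.1 →
        socObj p μ (c₀, c₁) s ≤ socObj p μ (c₀, c₁) s') → s = s0) := by
  intro a γ ρ s0
  have hγ : 2 < γ := two_lt_socGamma hμ hc₀
  obtain ⟨hρ, hργ, hsign⟩ : 0 < ρ ∧ ρ * (γ - ρ) = 1 ∧ 0 < c₀ * (ρ - 1) := socRho_spec hγ hc₀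
  have hρ1 : ρ - 1 ≠ 0 := by
    rintro h
    simp [h] at hsign
  have hκ : 0 ≤ ρ / (ρ + 1) := by positivity
  have hnorm : ‖s0.2‖ = ρ / (ρ + 1) * ‖c₁‖ := by
    rw [norm_smul, norm_of_nonneg hκ]
  have hxy : s0.1 ^ 2 - (ρ / (ρ + 1) * ‖c₁‖) ^ 2 = ρ * μ :=
    sq_sub_sq_eq_mul hρ hρ1 hργ (socGamma_key hμ)
  have hx0 : s0.1 * (ρ - 1) = ρ * c₀ := div_mul_cancel₀ _ hρ1
  obtain ⟨hu, hv⟩ := quadratic_roots_of_sq_sub_sq (r := ‖c₁‖) hρ.ne' hx0 (by field_simp) hxy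
  have hx : ρ / (ρ + 1) * ‖c₁‖ < s0.1 := by
    have hpos : 0 < s0.1 := by
      refine pos_of_mul_pos_left (b := (ρ - 1) ^ 2) ?_ (sq_nonneg _)
      rw [sq, ← mul_assoc, hx0, mul_assoc]
      exact mul_pos hρ hsign
    exact lt_of_pow_lt_pow_left₀ 2 hpos.le (by nlinarith)
  refine ⟨hγ, fun h => by nlinarith, fun h => ⟨hρ, by nlinarith⟩, hnorm ▸ hx, hnorm ▸ hxy,
    fun s hs => socObj_le_of_roots hμ.le hκ hx hu hv hs,
    fun s hs hmin => eq_of_socObj_le_of_roots hμ.le hκ hx hu hv hs (hmin s0 (hnorm ▸ hx))⟩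
end

section
/- Let μ⁰ > 0, λ > 0 and c ∈ ℝⁿ (n ≥ 2). Let s⁰ be the unique minimizer over the interior of K_soc^n of (1/2)‖s − c‖² − (μ⁰/2) log(s₀² − ‖s₁‖²), and set z⁰ = (s⁰ − c)/λ. Then s⁰ lies in the interior of K_soc^n, z⁰ lies in the interior of K_soc^n, and ⟨s⁰, z⁰⟩ = μ⁰/λ. -/
/-!
At an interior minimizer `s⁰ = (t, x)` the gradient of the smoothing objective vanishes:
`s⁰ − c = κ (t, −x)` with `κ = μ⁰ / (t² − ‖x‖²) > 0`. Hence `z⁰` is a positive multiple of the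
reflection `(t, −x)` of `s⁰`, which lies in the interior of the cone because `‖x‖ < t`, and
`⟨s⁰, (t, −x)⟩ = t² − ‖x‖²` cancels the denominator of `κ`.
-/

open scoped RealInnerProductSpace

variable {p : ℕ}

theorem isOpen_socInterior : IsOpen {s : ℝ × EuclideanSpace ℝ (Fin p) | ‖s.2‖ < s.1} :=
  isOpen_lt (by fun_prop) continuous_fst

theorem sq_sub_norm_sq_pos {s : ℝ × EuclideanSpace ℝ (Fin p)} (hs : ‖s.2‖ < s.1) :
    0 < s.1 ^ 2 - ‖s.2‖ ^ 2 := by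
  have := norm_nonneg s.2
  nlinarith

theorem hasDerivAt_socObj_add_smul (μ : ℝ) (c s w : ℝ × EuclideanSpace ℝ (Fin p))
    (hs : s.1 ^ 2 - ‖s.2‖ ^ 2 ≠ 0) :
    HasDerivAt (fun ε : ℝ => socObj p μ c (s + ε • w))
      ((s.1 - c.1 - μ / (s.1 ^ 2 - ‖s.2‖ ^ 2) * s.1) * w.1 +
        ⟪s.2 - c.2 + (μ / (s.1 ^ 2 - ‖s.2‖ ^ 2)) • s.2, w.2⟫) 0 := by
  have hu : HasDerivAt (fun ε : ℝ => s.1 + ε * w.1) w.1 0 := by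
    simpa using ((hasDerivAt_id (0 : ℝ)).mul_const w.1).const_add s.1
  have hy : HasDerivAt (fun ε : ℝ => s.2 + ε • w.2) w.2 0 := by
    simpa using ((hasDerivAt_id (0 : ℝ)).smul_const w.2).const_add s.2
  have hlog := ((hu.fun_pow 2).fun_sub hy.norm_sq).log (by simpa using hs)
  have hquad := ((hu.sub_const c.1).fun_pow 2).fun_add (hy.sub_const c.2).norm_sq
  have hline : (fun ε : ℝ => socObj p μ c (s + ε • w)) = fun ε =>
      1 / 2 * ((s.1 + ε * w.1 - c.1) ^ 2 + ‖s.2 + ε • w.2 - c.2‖ ^ 2) -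
        μ / 2 * Real.log ((s.1 + ε * w.1) ^ 2 - ‖s.2 + ε • w.2‖ ^ 2) := by
    ext ε; simp [socObj]
  rw [hline]
  refine ((hquad.const_mul (1 / 2)).fun_sub (hlog.const_mul (μ / 2))).congr_deriv ?_
  simp only [inner_add_left, real_inner_smul_left, inner_sub_left, zero_mul, add_zero, zero_smul]
  field_simp
  ring

theorem socObj_stationary {μ : ℝ} {c s₀ : ℝ × EuclideanSpace ℝ (Fin p)} (hs₀ : ‖s₀.2‖ < s₀.1)
    (hmin : IsMinOn (socObj p μ c) {s | ‖s.2‖ < s.1} s₀) :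
    s₀ - c = (μ / (s₀.1 ^ 2 - ‖s₀.2‖ ^ 2)) • (s₀.1, -s₀.2) := by
  set κ := μ / (s₀.1 ^ 2 - ‖s₀.2‖ ^ 2)
  set grad : ℝ × EuclideanSpace ℝ (Fin p) := (s₀.1 - c.1 - κ * s₀.1, s₀.2 - c.2 + κ • s₀.2)
  have hlocal : IsLocalMin (socObj p μ c) (s₀ + (0 : ℝ) • grad) := by
    simpa using hmin.isLocalMin (isOpen_socInterior.mem_nhds hs₀)
  -- the derivative along `grad` itself is `grad.1² + ‖grad.2‖²`
  have hgrad : grad.1 * grad.1 + ⟪grad.2, grad.2⟫ = 0 :=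
    (hlocal.comp_continuous (g := fun ε : ℝ => s₀ + ε • grad) (by fun_prop)).hasDerivAt_eq_zero
      (hasDerivAt_socObj_add_smul μ c s₀ grad (sq_sub_norm_sq_pos hs₀).ne')
  rw [real_inner_self_eq_norm_sq] at hgrad
  have hgrad₁ : grad.1 = 0 := by nlinarith [sq_nonneg ‖grad.2‖]
  have hgrad₂ : grad.2 = 0 := norm_eq_zero.mp (by nlinarith [norm_nonneg grad.2])
  refine Prod.ext ?_ ?_
  · simp only [grad] at hgrad₁
    simp only [Prod.fst_sub, Prod.smul_fst, smul_eq_mul]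
    linarith
  · simp only [Prod.snd_sub, Prod.smul_snd, smul_neg]
    exact eq_neg_iff_add_eq_zero.mpr hgrad₂

theorem stmt7_general (p : ℕ) (μ0 lam : ℝ) (hμ : 0 < μ0) (hlam : 0 < lam)
    (c s0 : ℝ × EuclideanSpace ℝ (Fin p))
    (hint : ‖s0.2‖ < s0.1)
    (hmin : ∀ s : ℝ × EuclideanSpace ℝ (Fin p), ‖s.2‖ < s.1 →
      socObj p μ0 c s0 ≤ socObj p μ0 c s) :
    let z0 : ℝ × EuclideanSpace ℝ (Fin p) := lam⁻¹ • (s0 - c)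
    ‖s0.2‖ < s0.1 ∧ ‖z0.2‖ < z0.1 ∧ s0.1 * z0.1 + ⟪s0.2, z0.2⟫ = μ0 / lam := by
  intro z0
  have hd := sq_sub_norm_sq_pos hint
  set κ := μ0 / (lam * (s0.1 ^ 2 - ‖s0.2‖ ^ 2)) with hκ_def
  have hκ : 0 < κ := by positivity
  have hz : z0 = κ • (s0.1, -s0.2) := by
    rw [show z0 = lam⁻¹ • (s0 - c) from rfl, socObj_stationary hint hmin, smul_smul]
    congr 1
    rw [hκ_def]
    field_simp
  refine ⟨hint, ?_, ?_⟩
  · rw [hz]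
    simpa [norm_smul, abs_of_pos hκ] using mul_lt_mul_of_pos_left hint hκ
  · rw [hz]
    simp only [Prod.smul_fst, Prod.smul_snd, smul_eq_mul, real_inner_smul_right, inner_neg_right,
      real_inner_self_eq_norm_sq]
    rw [hκ_def]
    field_simp
    ring

/-- Let `μ⁰ > 0`, `λ > 0`, `c ∈ ℝⁿ` (`n = p + 1 ≥ 2`), let `s⁰` be the (unique)
minimizer of `(1/2)‖s − c‖² − (μ⁰/2) log(s₀² − ‖s₁‖²)` over the interior of the
second-order cone, and `z⁰ = (s⁰ − c)/λ`. Then `s⁰` and `z⁰` lie in the interior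
of the second-order cone, and `⟨s⁰, z⁰⟩ = μ⁰/λ`. -/
theorem stmt7 (p : ℕ) (hp : 1 ≤ p) (μ0 lam : ℝ) (hμ : 0 < μ0) (hlam : 0 < lam)
    (c s0 : ℝ × EuclideanSpace ℝ (Fin p))
    (hint : ‖s0.2‖ < s0.1)
    (hmin : ∀ s : ℝ × EuclideanSpace ℝ (Fin p), ‖s.2‖ < s.1 →
      socObj p μ0 c s0 ≤ socObj p μ0 c s) :
    let z0 : ℝ × EuclideanSpace ℝ (Fin p) := lam⁻¹ • (s0 - c)
    ‖s0.2‖ < s0.1 ∧ ‖z0.2‖ < z0.1 ∧ s0.1 * z0.1 + ⟪s0.2, z0.2⟫ = μ0 / lam :=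
  stmt7_general p μ0 lam hμ hlam c s0 hint hmin
end

section
/- Let s = (s₀, s₁) and z = (z₀, z₁) belong to K_soc^n with s₀ > 0, z₀ > 0 and ⟨s, z⟩ = s₀z₀ + ⟨s₁, z₁⟩ = 0. Then s₀ = ‖s₁‖, z₀ = ‖z₁‖, and s₁ = −λ z₁ where λ = s₀/z₀; in particular, both s and z lie on the boundary of K_soc^n and s₁ and z₁ point in exactly opposite directions. -/
open scoped RealInnerProductSpace

/-! Cauchy–Schwarz and the cone constraints give
`s₀ z₀ = -⟪s₁, z₁⟫ ≤ ‖s₁‖ ‖z₁‖ ≤ s₀ z₀`, so every inequality in this chain is an equality: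
the second forces `s₀ = ‖s₁‖` and `z₀ = ‖z₁‖`, the first is the equality case of
Cauchy–Schwarz for `s₁` and `-z₁`, which makes them positively parallel. -/

theorem eq_and_eq_of_mul_eq_mul_of_le {α : Type*} [Semiring α] [PartialOrder α]
    [IsStrictOrderedRing α] {a b c d : α} (hab : a ≤ b) (hcd : c ≤ d) (ha : 0 ≤ a) (hc : 0 ≤ c)
    (hb : 0 < b) (hd : 0 < d) (h : a * c = b * d) : a = b ∧ c = d := by
  constructor
  · by_contra hne
    exact (mul_lt_mul_of_lt_of_le_of_nonneg_of_pos (hab.lt_of_ne hne) hcd ha hd).ne h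
  · by_contra hne
    exact (mul_lt_mul_of_le_of_lt_of_nonneg_of_pos hab (hcd.lt_of_ne hne) hc hb).ne h

section RealInnerProductSpace

variable {F : Type*} [NormedAddCommGroup F] [InnerProductSpace ℝ F]

theorem norm_eq_and_norm_eq_of_mul_add_inner_eq_zero {x y : F} {a b : ℝ} (hx : ‖x‖ ≤ a)
    (hy : ‖y‖ ≤ b) (ha : 0 < a) (hb : 0 < b) (h : a * b + ⟪x, y⟫ = 0) : ‖x‖ = a ∧ ‖y‖ = b := by
  have hle : a * b ≤ ‖x‖ * ‖y‖ := by
    linarith [neg_le_of_abs_le (abs_real_inner_le_norm x y)]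
  have hge : ‖x‖ * ‖y‖ ≤ a * b := mul_le_mul hx hy (norm_nonneg y) ha.le
  exact eq_and_eq_of_mul_eq_mul_of_le hx hy (norm_nonneg x) (norm_nonneg y) ha hb
    (le_antisymm hge hle)

theorem eq_neg_div_norm_smul_of_inner_eq_neg_norm_mul {x y : F} (hy : y ≠ 0)
    (h : ⟪x, y⟫ = -(‖x‖ * ‖y‖)) : x = -(‖x‖ / ‖y‖) • y := by
  have hparallel : ‖y‖ • x = ‖x‖ • -y := by
    have hneg : ⟪x, -y⟫ = ‖x‖ * ‖-y‖ := by rw [inner_neg_right, norm_neg, h, neg_neg]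
    simpa only [norm_neg] using inner_eq_norm_mul_iff_real.mp hneg
  have hy' : ‖y‖ ≠ 0 := norm_ne_zero_iff.mpr hy
  calc x = ‖y‖⁻¹ • (‖y‖ • x) := by rw [smul_smul, inv_mul_cancel₀ hy', one_smul]
    _ = -(‖x‖ / ‖y‖) • y := by rw [hparallel, smul_smul, smul_neg, ← neg_smul, div_eq_inv_mul]

end RealInnerProductSpace

/-- Let `s = (s₀, s₁)` and `z = (z₀, z₁)` belong to the second-order cone
(`‖s₁‖ ≤ s₀`, `‖z₁‖ ≤ z₀`) with `s₀ > 0`, `z₀ > 0` and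
`⟨s, z⟩ = s₀z₀ + ⟨s₁, z₁⟩ = 0`. Then `s₀ = ‖s₁‖`, `z₀ = ‖z₁‖` (both points are on
the boundary of the cone), and `s₁ = −λ z₁` where `λ = s₀/z₀` (`s₁` and `z₁`
point in exactly opposite directions). -/
theorem stmt9 (m : ℕ) (s0 z0 : ℝ) (s1 z1 : EuclideanSpace ℝ (Fin m))
    (hsK : ‖s1‖ ≤ s0) (hzK : ‖z1‖ ≤ z0)
    (hs0 : 0 < s0) (hz0 : 0 < z0)
    (hortho : s0 * z0 + ⟪s1, z1⟫ = 0) :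
    s0 = ‖s1‖ ∧ z0 = ‖z1‖ ∧ s1 = -(s0 / z0) • z1 := by
  obtain ⟨hs, hz⟩ := norm_eq_and_norm_eq_of_mul_add_inner_eq_zero hsK hzK hs0 hz0 hortho
  have hz1 : z1 ≠ 0 := norm_pos_iff.mp (hz ▸ hz0)
  have hinner : ⟪s1, z1⟫ = -(‖s1‖ * ‖z1‖) := by rw [hs, hz]; linarith
  refine ⟨hs.symm, hz.symm, ?_⟩
  simpa only [hs, hz] using eq_neg_div_norm_smul_of_inner_eq_neg_norm_mul hz1 hinner
end

section
/- Let s* = (s₀*, s₁*) and z* = (z₀*, z₁*) belong to K_soc^n with s₀* > 0, z₀* > 0 and ⟨s*, z*⟩ = 0, and let μ⁰ > 0 and λ = s₀*/z₀*. Then c := s* − λz* = (0, 2s₁*), the unique minimizer over the interior of K_soc^n of (1/2)‖s − c‖² − (μ⁰/2) log(s₀² − ‖s₁‖²) is s⁰ = (√(μ⁰ + ‖s₁*‖²), s₁*), the point z⁰ := (s⁰ − c)/λ equals (√(μ⁰/λ² + ‖z₁*‖²), z₁*), and ⟨s⁰, z⁰⟩ = μ⁰/λ. -/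
/-!
Complementarity of two boundary points of the cone forces equality in both cone inequalities and
in Cauchy–Schwarz, so `s₁* = -λ z₁*` and `c = (0, 2 s₁*)`. For this `c`, completing the square
splits the objective as `‖s₁ - s₁*‖² + ‖s₁*‖² + g(s₀² - ‖s₁‖²)` with `g y = y/2 - (μ/2) log y`,
which is minimised exactly at `y = μ` because `log t < t - 1` for `t ≠ 1`; hence the unique
minimiser has `s₁ = s₁*` and `s₀² - ‖s₁‖² = μ`. The formulas for `z⁰` and `⟨s⁰, z⁰⟩` follow by
substituting `s₁* = -λ z₁*`, i.e. `‖s₁*‖ = λ ‖z₁*‖`.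
-/

open scoped RealInnerProductSpace

section Complementarity

variable {E : Type*} [NormedAddCommGroup E] [InnerProductSpace ℝ E] {a b : ℝ} {x y : E}

theorem norm_eq_of_mul_add_inner_eq_zero (hx : ‖x‖ ≤ a) (hy : ‖y‖ ≤ b) (ha : 0 < a)
    (hb : 0 < b) (h : a * b + ⟪x, y⟫ = 0) : ‖x‖ = a ∧ ‖y‖ = b := by
  have hcs : a * b ≤ ‖x‖ * ‖y‖ := by
    linarith [neg_le_of_abs_le (abs_real_inner_le_norm x y)]
  constructor <;> nlinarith [norm_nonneg x, norm_nonneg y]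

theorem div_smul_eq_neg_of_mul_add_inner_eq_zero (hx : ‖x‖ ≤ a) (hy : ‖y‖ ≤ b) (ha : 0 < a)
    (hb : 0 < b) (h : a * b + ⟪x, y⟫ = 0) : (a / b) • y = -x := by
  obtain ⟨hxa, hyb⟩ := norm_eq_of_mul_add_inner_eq_zero hx hy ha hb h
  have hcs : ⟪x, -y⟫ = ‖x‖ * ‖-y‖ := by
    rw [inner_neg_right, norm_neg, hxa, hyb]
    linarith
  have hpar := inner_eq_norm_mul_iff_real.mp hcs
  rw [norm_neg, hxa, hyb, smul_neg] at hpar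
  calc (a / b) • y = -(b⁻¹ • -(a • y)) := by rw [smul_neg, neg_neg, smul_smul, div_eq_inv_mul]
    _ = -x := by rw [← hpar, smul_smul, inv_mul_cancel₀ hb.ne', one_smul]

end Complementarity

section Smoothing

noncomputable def barrierProfile (μ y : ℝ) : ℝ := y / 2 - μ / 2 * Real.log y

variable {μ y : ℝ}

theorem barrierProfile_lt (hμ : 0 < μ) (hy : 0 < y) (hne : y ≠ μ) :
    barrierProfile μ μ < barrierProfile μ y := by
  have hlog := Real.log_lt_sub_one_of_pos (div_pos hy hμ)
    (by rwa [ne_eq, div_eq_one_iff_eq hμ.ne'])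
  rw [Real.log_div hy.ne' hμ.ne'] at hlog
  have hscaled := mul_lt_mul_of_pos_left hlog (half_pos hμ)
  have hexpand : μ / 2 * (y / μ - 1) = y / 2 - μ / 2 := by field_simp
  unfold barrierProfile
  linarith

theorem barrierProfile_le (hμ : 0 < μ) (hy : 0 < y) :
    barrierProfile μ μ ≤ barrierProfile μ y := by
  rcases eq_or_ne y μ with rfl | hne
  · exact le_rfl
  · exact (barrierProfile_lt hμ hy hne).le

variable {p : ℕ} (v : EuclideanSpace ℝ (Fin p))

theorem socObj_zero_two_smul (μ : ℝ) (s : ℝ × EuclideanSpace ℝ (Fin p)) :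
    socObj p μ (0, (2 : ℝ) • v) s =
      ‖s.2 - v‖ ^ 2 + ‖v‖ ^ 2 + barrierProfile μ (s.1 ^ 2 - ‖s.2‖ ^ 2) := by
  unfold socObj barrierProfile
  rw [norm_sub_sq_real s.2, norm_sub_sq_real s.2, real_inner_smul_right, norm_smul,
    Real.norm_two]
  ring

theorem socObj_lt_of_ne (hμ : 0 < μ) {s : ℝ × EuclideanSpace ℝ (Fin p)} (hs : ‖s.2‖ < s.1)
    (hne : s ≠ (√(μ + ‖v‖ ^ 2), v)) :
    socObj p μ (0, (2 : ℝ) • v) (√(μ + ‖v‖ ^ 2), v) < socObj p μ (0, (2 : ℝ) • v) s := by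
  have hslack : √(μ + ‖v‖ ^ 2) ^ 2 - ‖v‖ ^ 2 = μ := by
    rw [Real.sq_sqrt (by positivity)]
    ring
  have hy : 0 < s.1 ^ 2 - ‖s.2‖ ^ 2 := by nlinarith [norm_nonneg s.2]
  rw [socObj_zero_two_smul, socObj_zero_two_smul, hslack, sub_self, norm_zero]
  by_cases h2 : s.2 = v
  · have hyne : s.1 ^ 2 - ‖s.2‖ ^ 2 ≠ μ := by
      intro hyμ
      refine hne (Prod.ext ?_ h2)
      rw [← h2, ← hyμ, sub_add_cancel, Real.sqrt_sq (by linarith [norm_nonneg s.2])]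
    have hbar := barrierProfile_lt hμ hy hyne
    rw [show ‖s.2 - v‖ = 0 by rw [h2, sub_self, norm_zero]]
    linarith
  · have hdist := pow_pos (norm_pos_iff.mpr (sub_ne_zero.mpr h2)) 2
    have hbar := barrierProfile_le hμ hy
    linarith

end Smoothing

section DualPoint

variable {E : Type*} [NormedAddCommGroup E] [InnerProductSpace ℝ E] {lam : ℝ} {v w : E}

theorem sqrt_add_norm_sq_eq_mul_sqrt (hlam : 0 < lam) (hvw : lam • w = -v) (μ : ℝ) :
    √(μ + ‖v‖ ^ 2) = lam * √(μ / lam ^ 2 + ‖w‖ ^ 2) := by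
  have hnorm : ‖v‖ = lam * ‖w‖ := by
    rw [← norm_neg, ← hvw, norm_smul, Real.norm_of_nonneg hlam.le]
  rw [hnorm, show μ + (lam * ‖w‖) ^ 2 = lam ^ 2 * (μ / lam ^ 2 + ‖w‖ ^ 2) by field_simp,
    Real.sqrt_mul (sq_nonneg _), Real.sqrt_sq hlam.le]

theorem inv_smul_sqrt_sub_two_smul_eq (hlam : 0 < lam) (hvw : lam • w = -v) (μ : ℝ) :
    lam⁻¹ • ((√(μ + ‖v‖ ^ 2), v) - ((0 : ℝ), (2 : ℝ) • v)) =
      (√(μ / lam ^ 2 + ‖w‖ ^ 2), w) := by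
  rw [Prod.mk_sub_mk, Prod.smul_mk, sub_zero, sqrt_add_norm_sq_eq_mul_sqrt hlam hvw,
    smul_eq_mul, inv_mul_cancel_left₀ hlam.ne',
    show v - (2 : ℝ) • v = lam • w by rw [hvw]; module, inv_smul_smul₀ hlam.ne']

theorem sqrt_mul_sqrt_add_inner_eq {μ : ℝ} (hlam : 0 < lam) (hvw : lam • w = -v) (hμ : 0 ≤ μ) :
    √(μ + ‖v‖ ^ 2) * √(μ / lam ^ 2 + ‖w‖ ^ 2) + ⟪v, w⟫ = μ / lam := by
  have hv : v = -(lam • w) := by rw [hvw, neg_neg]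
  rw [sqrt_add_norm_sq_eq_mul_sqrt hlam hvw, mul_assoc, Real.mul_self_sqrt (by positivity), hv,
    inner_neg_left, real_inner_smul_left, real_inner_self_eq_norm_sq]
  field_simp
  ring

end DualPoint

/-- Let `s* = (s₀*, s₁*)`, `z* = (z₀*, z₁*)` belong to the second-order cone with
`s₀* > 0`, `z₀* > 0`, `⟨s*, z*⟩ = 0`, and let `μ⁰ > 0`, `λ = s₀*/z₀*`. Then
`c := s* − λz* = (0, 2s₁*)`, the unique minimizer over the interior of the cone of
`(1/2)‖s − c‖² − (μ⁰/2) log(s₀² − ‖s₁‖²)` is `s⁰ = (√(μ⁰ + ‖s₁*‖²), s₁*)`,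
the point `z⁰ := (s⁰ − c)/λ` equals `(√(μ⁰/λ² + ‖z₁*‖²), z₁*)`, and
`⟨s⁰, z⁰⟩ = μ⁰/λ`. -/
theorem stmt10 (p : ℕ) (μ0 : ℝ) (hμ : 0 < μ0)
    (s0star z0star : ℝ) (s1star z1star : EuclideanSpace ℝ (Fin p))
    (hsK : ‖s1star‖ ≤ s0star) (hzK : ‖z1star‖ ≤ z0star)
    (hs0 : 0 < s0star) (hz0 : 0 < z0star)
    (hcomp : s0star * z0star + ⟪s1star, z1star⟫ = 0) :
    let lam : ℝ := s0star / z0star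
    let c : ℝ × EuclideanSpace ℝ (Fin p) :=
      ((s0star, s1star) : ℝ × EuclideanSpace ℝ (Fin p)) - lam • (z0star, z1star)
    let s0 : ℝ × EuclideanSpace ℝ (Fin p) := (Real.sqrt (μ0 + ‖s1star‖ ^ 2), s1star)
    let z0 : ℝ × EuclideanSpace ℝ (Fin p) := lam⁻¹ • (s0 - c)
    c = ((0 : ℝ), (2 : ℝ) • s1star) ∧
    (‖s0.2‖ < s0.1 ∧
      ∀ s : ℝ × EuclideanSpace ℝ (Fin p), ‖s.2‖ < s.1 →
        socObj p μ0 c s0 ≤ socObj p μ0 c s) ∧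
    (∀ s : ℝ × EuclideanSpace ℝ (Fin p), ‖s.2‖ < s.1 →
      (∀ s' : ℝ × EuclideanSpace ℝ (Fin p), ‖s'.2‖ < s'.1 →
        socObj p μ0 c s ≤ socObj p μ0 c s') → s = s0) ∧
    z0 = ((Real.sqrt (μ0 / lam ^ 2 + ‖z1star‖ ^ 2), z1star) :
      ℝ × EuclideanSpace ℝ (Fin p)) ∧
    s0.1 * z0.1 + ⟪s0.2, z0.2⟫ = μ0 / lam := by
  intro lam c s0 z0
  have hanti : lam • z1star = -s1star :=
    div_smul_eq_neg_of_mul_add_inner_eq_zero hsK hzK hs0 hz0 hcomp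
  have hlam : 0 < lam := div_pos hs0 hz0
  have hc : c = (0, (2 : ℝ) • s1star) := by
    simp only [c, Prod.smul_mk, Prod.mk_sub_mk, hanti, smul_eq_mul, lam,
      div_mul_cancel₀ _ hz0.ne', sub_self, sub_neg_eq_add, two_smul]
  have hs0int : ‖s0.2‖ < s0.1 := (Real.lt_sqrt (norm_nonneg _)).mpr (by linarith)
  have hz0eq : z0 = (√(μ0 / lam ^ 2 + ‖z1star‖ ^ 2), z1star) := by
    simp only [z0, hc, s0]
    exact inv_smul_sqrt_sub_two_smul_eq hlam hanti μ0
  refine ⟨hc, ⟨hs0int, fun s hs => ?_⟩, fun s hs hmin => ?_, hz0eq, ?_⟩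
  · rw [hc]
    rcases eq_or_ne s s0 with rfl | hne
    · exact le_rfl
    · exact (socObj_lt_of_ne s1star hμ hs hne).le
  · by_contra hne
    rw [hc] at hmin
    exact (hmin s0 hs0int).not_gt (socObj_lt_of_ne s1star hμ hs hne)
  · rw [hz0eq]
    exact sqrt_mul_sqrt_add_inner_eq hlam hanti hμ.le
end

section
/- Let S* and Z* be n×n real symmetric positive semidefinite matrices with S*Z* = 0 and rank(S*) + rank(Z*) = n, let μ⁰ > 0, and set C = S* − Z*. Let S⁰ be the unique symmetric positive definite solution of S − C − μ⁰S⁻¹ = 0 and Z⁰ = S⁰ − C. Then S⁰ − S* = Z⁰ − Z*, and the operator norm of S⁰ − S* satisfies ‖S⁰ − S*‖ ≤ min{ μ⁰ / minᵢ |dᵢ| , √(μ⁰) }, where d₁, …, dₙ are the (all nonzero) eigenvalues of C. -/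
/-!
Since `S* Z* = 0`, the matrix `S* + Z*` is positive semidefinite with square `C²`, so it is `|C|`.
Likewise `S⁰ + μ⁰ S⁰⁻¹` is positive definite with square `(S⁰ − μ⁰ S⁰⁻¹)² + 4μ⁰ = C² + 4μ⁰`, so it
is `√(C² + 4μ⁰)`. Subtracting, `S⁰ − S* = g(C)` with `g(d) = (√(d² + 4μ⁰) − |d|) / 2`, a function
of `C` alone; its norm is `maxᵢ g(dᵢ)`. As `g(d)` is the positive root of `t² + |d| t = μ⁰`, it is
at most `μ⁰ / |d|` and at most `√μ⁰`. The rank condition makes `C` invertible, so `dᵢ ≠ 0`.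
-/

open Matrix
open scoped ComplexOrder MatrixOrder Matrix.Norms.L2Operator

-- the positive root of `t ^ 2 + |x| * t = μ`
noncomputable def smoothingGap (μ x : ℝ) : ℝ := 2⁻¹ * (√(x ^ 2 + 4 * μ) - |x|)

section smoothingGap

variable {μ : ℝ}

theorem smoothingGap_nonneg (x : ℝ) (hμ : 0 ≤ μ) : 0 ≤ smoothingGap μ x := by
  have := Real.abs_le_sqrt (show x ^ 2 ≤ x ^ 2 + 4 * μ by linarith)
  unfold smoothingGap
  linarith

theorem smoothingGap_mul_add_abs (x : ℝ) (hμ : 0 ≤ μ) :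
    smoothingGap μ x * (smoothingGap μ x + |x|) = μ := by
  have h := Real.sq_sqrt (show 0 ≤ x ^ 2 + 4 * μ by positivity)
  unfold smoothingGap
  nlinarith [sq_abs x]

theorem smoothingGap_le_div_abs (hμ : 0 ≤ μ) {x : ℝ} (hx : x ≠ 0) :
    smoothingGap μ x ≤ μ / |x| := by
  rw [le_div_iff₀ (abs_pos.mpr hx)]
  nlinarith [smoothingGap_mul_add_abs x hμ, smoothingGap_nonneg x hμ]

theorem smoothingGap_le_sqrt (x : ℝ) (hμ : 0 ≤ μ) : smoothingGap μ x ≤ √μ := by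
  apply Real.le_sqrt_of_sq_le
  nlinarith [smoothingGap_mul_add_abs x hμ, smoothingGap_nonneg x hμ, abs_nonneg x]

theorem smoothingGap_le_min (x : ℝ) (hμ : 0 ≤ μ) {m : ℝ} (hm : 0 < m) (hmx : m ≤ |x|) :
    smoothingGap μ x ≤ min (μ / m) √μ :=
  le_min ((smoothingGap_le_div_abs hμ (abs_pos.mp (hm.trans_le hmx))).trans
    (div_le_div_of_nonneg_left hμ hm hmx)) (smoothingGap_le_sqrt x hμ)

end smoothingGap

section CFCSquareRoots

variable {A : Type*} [PartialOrder A] [Ring A] [StarRing A] [TopologicalSpace A]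
  [StarOrderedRing A] [Algebra ℝ A] [ContinuousFunctionalCalculus ℝ A IsSelfAdjoint]
  [NonnegSpectrumClass ℝ A] [IsSemitopologicalRing A] [T2Space A]

theorem eq_cfc_of_sq_eq {a b : A} {f : ℝ → ℝ} (hb : 0 ≤ b)
    (hf : ∀ x ∈ spectrum ℝ a, 0 ≤ f x) (h : b ^ 2 = cfc (fun x => f x ^ 2) a)
    (hfc : ContinuousOn f (spectrum ℝ a) := by cfc_cont_tac)
    (ha : IsSelfAdjoint a := by cfc_tac) : b = cfc f a := by
  rwa [← CFC.sq_eq_sq_iff b (cfc f a) hb (cfc_nonneg hf), ← cfc_pow f 2 a]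

theorem add_eq_cfc_abs_sub {s z : A} (hs : 0 ≤ s) (hz : 0 ≤ z) (hsz : s * z = 0) :
    s + z = cfc (fun x : ℝ => |x|) (s - z) := by
  have hs' := IsSelfAdjoint.of_nonneg hs
  have hz' := IsSelfAdjoint.of_nonneg hz
  have hzs : z * s = 0 := by simpa [hs'.star_eq, hz'.star_eq] using congrArg star hsz
  refine eq_cfc_of_sq_eq (add_nonneg hs hz) (fun x _ => abs_nonneg x) ?_ (ha := hs'.sub hz')
  simp only [sq_abs]
  rw [cfc_pow_id _ _ (hs'.sub hz')]
  simp only [sq, add_mul, mul_add, sub_mul, mul_sub, hsz, hzs]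
  abel

theorem add_eq_cfc_sqrt_sub {s t : A} {μ : ℝ} (hμ : 0 ≤ μ) (hs : 0 ≤ s) (ht : 0 ≤ t)
    (hst : s * t = algebraMap ℝ A μ) (hts : t * s = algebraMap ℝ A μ) :
    s + t = cfc (fun x => √(x ^ 2 + 4 * μ)) (s - t) := by
  have hsub := (IsSelfAdjoint.of_nonneg hs).sub (IsSelfAdjoint.of_nonneg ht)
  refine eq_cfc_of_sq_eq (add_nonneg hs ht) (fun x _ => Real.sqrt_nonneg _) ?_ (ha := hsub)
  simp only [Real.sq_sqrt (add_nonneg (sq_nonneg _) (mul_nonneg zero_le_four hμ))]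
  rw [cfc_add_const _ _ _ (ha := hsub), cfc_pow_id _ _ hsub]
  simp only [sq, add_mul, mul_add, sub_mul, mul_sub, hst, hts, map_mul, map_ofNat]
  noncomm_ring

theorem sub_eq_cfc_smoothingGap {s t p z : A} {μ : ℝ} (hμ : 0 ≤ μ) (hs : 0 ≤ s) (ht : 0 ≤ t)
    (hst : s * t = algebraMap ℝ A μ) (hts : t * s = algebraMap ℝ A μ)
    (hp : 0 ≤ p) (hz : 0 ≤ z) (hpz : p * z = 0) (h : s - t = p - z) :
    s - p = cfc (smoothingGap μ) (p - z) := by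
  have hM := add_eq_cfc_sqrt_sub hμ hs ht hst hts
  rw [h] at hM
  unfold smoothingGap
  rw [cfc_const_mul 2⁻¹ (fun x => √(x ^ 2 + 4 * μ) - |x|) (p - z),
    cfc_sub (fun x => √(x ^ 2 + 4 * μ)) (fun x => |x|) (p - z), ← hM,
    ← add_eq_cfc_abs_sub hp hz hpz]
  linear_combination (norm := module) (2⁻¹ : ℝ) • h

end CFCSquareRoots

namespace Matrix

theorem range_mulVecLin_eq_ker_of_mul_eq_zero {K m n p : Type*} [Field K] [Fintype n]
    [Fintype p] {A : Matrix m n K} {B : Matrix n p K} (hAB : A * B = 0)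
    (hrank : A.rank + B.rank = Fintype.card n) :
    LinearMap.range B.mulVecLin = LinearMap.ker A.mulVecLin := by
  refine Submodule.eq_of_le_of_finrank_eq ?_ ?_
  · rintro _ ⟨y, rfl⟩
    simp [mulVec_mulVec, hAB]
  · have := LinearMap.finrank_range_add_finrank_ker A.mulVecLin
    simp only [Module.finrank_fintype_fun_eq_card] at this
    unfold Matrix.rank at hrank
    omega

theorem IsHermitian.star_mulVec_dotProduct {𝕜 n : Type*} [RCLike 𝕜] [Fintype n]
    {A : Matrix n n 𝕜} (hA : A.IsHermitian) (v w : n → 𝕜) :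
    star (A *ᵥ v) ⬝ᵥ w = star v ⬝ᵥ A *ᵥ w := by
  rw [star_mulVec, hA.eq, dotProduct_mulVec]

theorem IsHermitian.isUnit_sub_of_mul_eq_zero {𝕜 n : Type*} [RCLike 𝕜] [Fintype n]
    [DecidableEq n] {S Z : Matrix n n 𝕜} (hS : S.IsHermitian) (hZ : Z.IsHermitian)
    (hSZ : S * Z = 0) (hrank : S.rank + Z.rank = Fintype.card n) : IsUnit (S - Z) := by
  rw [isUnit_iff_isUnit_det, isUnit_iff_ne_zero, Ne, ← exists_mulVec_eq_zero_iff]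
  rintro ⟨v, hv, hSZv⟩
  have hSv : S *ᵥ v = Z *ᵥ v := sub_eq_zero.mp (by rwa [← sub_mulVec])
  have hZv : Z *ᵥ v = 0 := by
    have h : star (S *ᵥ v) ⬝ᵥ Z *ᵥ v = 0 := by
      rw [hS.star_mulVec_dotProduct, mulVec_mulVec, hSZ, zero_mulVec, dotProduct_zero]
    rwa [hSv, dotProduct_star_self_eq_zero] at h
  obtain ⟨y, rfl⟩ : v ∈ LinearMap.range Z.mulVecLin := by
    rw [range_mulVecLin_eq_ker_of_mul_eq_zero hSZ hrank]
    exact hSv.trans hZv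
  rw [Ne, ← dotProduct_star_self_eq_zero] at hv
  rw [mulVecLin_apply] at hv hZv
  exact hv (by rw [hZ.star_mulVec_dotProduct, hZv, dotProduct_zero])

end Matrix

theorem stmt12_general (n : ℕ) (hne : (Finset.univ : Finset (Fin n)).Nonempty)
    (μ0 : ℝ) (hμ : 0 < μ0)
    (Sstar Zstar : Matrix (Fin n) (Fin n) ℝ)
    (hS : Sstar.PosSemidef) (hZ : Zstar.PosSemidef) (hSZ : Sstar * Zstar = 0)
    (hrank : Sstar.rank + Zstar.rank = n)
    (C : Matrix (Fin n) (Fin n) ℝ) (hCdef : C = Sstar - Zstar)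
    (hCherm : C.IsHermitian)
    (S0 : Matrix (Fin n) (Fin n) ℝ) (hS0pd : S0.PosDef)
    (heq : S0 - C - μ0 • S0⁻¹ = 0) :
    let Z0 : Matrix (Fin n) (Fin n) ℝ := S0 - C
    S0 - Sstar = Z0 - Zstar ∧
    ‖Matrix.toEuclideanCLM (𝕜 := ℝ) (S0 - Sstar)‖ ≤
      min (μ0 / Finset.univ.inf' hne fun i => |hCherm.eigenvalues i|)
        (Real.sqrt μ0) := by
  intro Z0
  refine ⟨by simp only [Z0, hCdef]; abel, ?_⟩
  have hdet : IsUnit S0.det := hS0pd.det_pos.ne'.isUnit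
  have hgap : S0 - Sstar = cfc (smoothingGap μ0) C := by
    rw [hCdef]
    refine sub_eq_cfc_smoothingGap hμ.le hS0pd.posSemidef.nonneg
      (hS0pd.inv.posSemidef.smul hμ.le).nonneg ?_ ?_ hS.nonneg hZ.nonneg hSZ
      (by rw [← hCdef, ← sub_eq_zero, ← heq]; abel)
    · rw [mul_smul_comm, mul_nonsing_inv _ hdet, Algebra.algebraMap_eq_smul_one]
    · rw [smul_mul_assoc, nonsing_inv_mul _ hdet, Algebra.algebraMap_eq_smul_one]
  have hCunit : IsUnit C := hCdef ▸
    hS.isHermitian.isUnit_sub_of_mul_eq_zero hZ.isHermitian hSZ (by simpa using hrank)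
  have heig_ne : ∀ i, hCherm.eigenvalues i ≠ 0 := fun i h0 =>
    spectrum.zero_notMem ℝ hCunit (h0 ▸ hCherm.eigenvalues_mem_spectrum_real i)
  have hmin : 0 < Finset.univ.inf' hne fun i => |hCherm.eigenvalues i| :=
    (Finset.lt_inf'_iff hne).mpr fun i _ => abs_pos.mpr (heig_ne i)
  rw [l2_opNorm_toEuclideanCLM, hgap]
  refine norm_cfc_le (by positivity) fun x hx => ?_
  obtain ⟨i, rfl⟩ := hCherm.spectrum_real_eq_range_eigenvalues ▸ hx
  rw [Real.norm_eq_abs, abs_of_nonneg (smoothingGap_nonneg _ hμ.le)]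
  exact smoothingGap_le_min _ hμ.le hmin (Finset.inf'_le _ (Finset.mem_univ i))

/-- Let `S*`, `Z*` be real symmetric positive semidefinite `n×n` matrices with
`S*Z* = 0` and `rank S* + rank Z* = n`, let `μ⁰ > 0`, and set `C = S* − Z*`
(a symmetric, hence Hermitian, matrix with all eigenvalues `dᵢ` nonzero). Let `S⁰`
be the (unique) symmetric positive definite solution of `S − C − μ⁰S⁻¹ = 0` and
`Z⁰ = S⁰ − C`. Then `S⁰ − S* = Z⁰ − Z*` and the spectral (operator 2-) norm of
`S⁰ − S*` satisfies `‖S⁰ − S*‖ ≤ min{μ⁰ / minᵢ|dᵢ|, √μ⁰}`. The spectral norm is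
expressed as the operator norm of the associated continuous linear map on
Euclidean space. -/
theorem stmt12 (n : ℕ) (hne : (Finset.univ : Finset (Fin n)).Nonempty)
    (μ0 : ℝ) (hμ : 0 < μ0)
    (Sstar Zstar : Matrix (Fin n) (Fin n) ℝ)
    (hS : Sstar.PosSemidef) (hZ : Zstar.PosSemidef) (hSZ : Sstar * Zstar = 0)
    (hrank : Sstar.rank + Zstar.rank = n)
    (C : Matrix (Fin n) (Fin n) ℝ) (hCdef : C = Sstar - Zstar)
    (hCherm : C.IsHermitian)
    (S0 : Matrix (Fin n) (Fin n) ℝ) (hS0s : S0.IsSymm) (hS0pd : S0.PosDef)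
    (heq : S0 - C - μ0 • S0⁻¹ = 0) :
    let Z0 : Matrix (Fin n) (Fin n) ℝ := S0 - C
    S0 - Sstar = Z0 - Zstar ∧
    ‖Matrix.toEuclideanCLM (𝕜 := ℝ) (S0 - Sstar)‖ ≤
      min (μ0 / Finset.univ.inf' hne fun i => |hCherm.eigenvalues i|)
        (Real.sqrt μ0) :=
  stmt12_general n hne μ0 hμ Sstar Zstar hS hZ hSZ hrank C hCdef hCherm S0 hS0pd heq
end

section
/- Consider the residual map R(x, s, z) = (Px + Aᵀz + q, −Ax + b − s) with P ∈ ℝ^{n×n} symmetric positive semidefinite, A ∈ ℝ^{m×n}, q ∈ ℝⁿ, b ∈ ℝᵐ. Let x* ∈ ℝⁿ and s*, z* ∈ ℝᵐ satisfy s* ≥ 0, z* ≥ 0, ⟨s*, z*⟩ = 0, and for every i ∈ {1,…,m} at least one of sᵢ*, zᵢ* is nonzero. Set μ⁰ = ‖R(x*, s*, z*)‖_∞ and assume μ⁰ > 0. Let c = s* − z*, let s⁰ be given componentwise by s⁰ᵢ = (cᵢ + √(cᵢ² + 4μ⁰))/2, let z⁰ = s⁰ − c, and x⁰ = x*. Then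 ‖R(x⁰, s⁰, z⁰)‖_∞ ≤ (1 + (‖Aᵀ‖_∞ + 1)/minᵢ |cᵢ|) · μ⁰, where ‖Aᵀ‖_∞ is the operator ∞-norm of Aᵀ (the maximum absolute column sum of A) and ‖·‖_∞ on residuals is the maximum absolute entry of the concatenated vector. -/
/-!
Write `c = s* − z*`. Componentwise complementarity gives `|cᵢ| = sᵢ* + zᵢ*`, so the smoothed point
is the optimal pair shifted along the diagonal: `s⁰ = s* + d` and `z⁰ = z* + d` with
`dᵢ = (√(cᵢ² + 4μ⁰) − |cᵢ|)/2`. Such a shift changes the residual by exactly `(Aᵀd, −d)`, and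
`(|cᵢ| + 2μ⁰/|cᵢ|)² ≥ cᵢ² + 4μ⁰` gives `0 ≤ dᵢ ≤ μ⁰/|cᵢ|`, whence the bound.
-/

open Matrix

/-- The residual map `R(x, s, z) = (Px + Aᵀz + q, −Ax + b − s)` of the primal-dual
pair of conic programs. -/
def resMap (n m : ℕ) (P : Matrix (Fin n) (Fin n) ℝ) (A : Matrix (Fin m) (Fin n) ℝ)
    (q : Fin n → ℝ) (b : Fin m → ℝ) (x : Fin n → ℝ) (s z : Fin m → ℝ) :
    (Fin n → ℝ) × (Fin m → ℝ) :=
  (P.mulVec x + Aᵀ.mulVec z + q, -(A.mulVec x) + b - s)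

open Finset

lemma abs_sub_eq_add_of_mul_eq_zero {s z : ℝ} (hs : 0 ≤ s) (hz : 0 ≤ z) (h : s * z = 0) :
    |s - z| = s + z := by
  rcases mul_eq_zero.mp h with rfl | rfl
  · simp [abs_of_nonneg hz]
  · simp [abs_of_nonneg hs]

lemma sub_ne_zero_of_mul_eq_zero {s z : ℝ} (hs : 0 ≤ s) (hz : 0 ≤ z) (h : s * z = 0)
    (hsz : s ≠ 0 ∨ z ≠ 0) : s - z ≠ 0 := by
  refine abs_pos.mp ?_
  rw [abs_sub_eq_add_of_mul_eq_zero hs hz h]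
  rcases hsz with hs' | hz'
  · exact add_pos_of_pos_of_nonneg (hs.lt_of_ne' hs') hz
  · exact add_pos_of_nonneg_of_pos hs (hz.lt_of_ne' hz')

noncomputable def smoothShift (c μ : ℝ) : ℝ := (√(c ^ 2 + 4 * μ) - |c|) / 2

lemma smoothShift_nonneg (c : ℝ) {μ : ℝ} (hμ : 0 ≤ μ) : 0 ≤ smoothShift c μ := by
  have : |c| ≤ √(c ^ 2 + 4 * μ) := by
    rw [← Real.sqrt_sq_eq_abs]
    exact Real.sqrt_le_sqrt (by linarith)
  unfold smoothShift
  linarith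

lemma smoothShift_le_div_abs {c μ : ℝ} (hc : c ≠ 0) (hμ : 0 ≤ μ) :
    smoothShift c μ ≤ μ / |c| := by
  have hc' : 0 < |c| := abs_pos.mpr hc
  have hsqrt : √(c ^ 2 + 4 * μ) ≤ |c| + 2 * (μ / |c|) := by
    rw [Real.sqrt_le_left (by positivity)]
    have : μ / |c| * |c| = μ := div_mul_cancel₀ _ hc'.ne'
    nlinarith [sq_abs c, sq_nonneg (μ / |c|)]
  unfold smoothShift
  linarith

lemma half_add_sqrt_eq_add_smoothShift {s z : ℝ} (hs : 0 ≤ s) (hz : 0 ≤ z) (h : s * z = 0)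
    (μ : ℝ) : (s - z + √((s - z) ^ 2 + 4 * μ)) / 2 = s + smoothShift (s - z) μ := by
  rw [smoothShift, abs_sub_eq_add_of_mul_eq_zero hs hz h]
  ring

lemma sup'_sum_abs_nonneg {ι κ : Type*} [Fintype ι] [Fintype κ]
    (hκ : (univ : Finset κ).Nonempty) (A : Matrix ι κ ℝ) :
    0 ≤ univ.sup' hκ fun j => ∑ i, |A i j| :=
  le_sup'_of_le _ (mem_univ hκ.choose) (sum_nonneg fun _ _ => abs_nonneg _)

lemma norm_transpose_mulVec_le {ι κ : Type*} [Fintype ι] [Fintype κ]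
    (hκ : (univ : Finset κ).Nonempty) (A : Matrix ι κ ℝ) (v : ι → ℝ) :
    ‖Aᵀ *ᵥ v‖ ≤ (univ.sup' hκ fun j => ∑ i, |A i j|) * ‖v‖ := by
  set K := univ.sup' hκ fun j => ∑ i, |A i j|
  have hcol : ∀ j, ∑ i, |A i j| ≤ K := fun j => le_sup' (fun j => ∑ i, |A i j|) (mem_univ j)
  have hK : 0 ≤ K := sup'_sum_abs_nonneg hκ A
  refine (pi_norm_le_iff_of_nonneg (by positivity)).mpr fun j => ?_
  calc ‖(Aᵀ *ᵥ v) j‖ = |∑ i, A i j * v i| := rfl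
    _ ≤ ∑ i, |A i j| * ‖v‖ := by
      refine (abs_sum_le_sum_abs _ _).trans (sum_le_sum fun i _ => ?_)
      rw [abs_mul]
      exact mul_le_mul_of_nonneg_left (norm_le_pi_norm v i) (abs_nonneg _)
    _ = (∑ i, |A i j|) * ‖v‖ := (sum_mul ..).symm
    _ ≤ K * ‖v‖ := mul_le_mul_of_nonneg_right (hcol j) (norm_nonneg v)

section Residual

variable {n m : ℕ} (P : Matrix (Fin n) (Fin n) ℝ) (A : Matrix (Fin m) (Fin n) ℝ)
  (q : Fin n → ℝ) (b : Fin m → ℝ) (x : Fin n → ℝ) (s z d : Fin m → ℝ)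

lemma resMap_add_add :
    resMap n m P A q b x (s + d) (z + d) = resMap n m P A q b x s z + (Aᵀ *ᵥ d, -d) := by
  simp only [resMap, mulVec_add, Prod.mk_add_mk]
  congr 1 <;> abel

lemma residual_norm_add_add_le (hn : (univ : Finset (Fin n)).Nonempty) :
    let R := resMap n m P A q b x s z
    let R' := resMap n m P A q b x (s + d) (z + d)
    max ‖R'.1‖ ‖R'.2‖ ≤ max ‖R.1‖ ‖R.2‖ + ((univ.sup' hn fun j => ∑ i, |A i j|) + 1) * ‖d‖ := by
  intro R R'
  have hA := norm_transpose_mulVec_le hn A d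
  have hK : 0 ≤ (univ.sup' hn fun j => ∑ i, |A i j|) * ‖d‖ := (norm_nonneg _).trans hA
  have h₁ : ‖R'.1‖ ≤ ‖R.1‖ + ‖Aᵀ *ᵥ d‖ := by
    rw [show R'.1 = R.1 + Aᵀ *ᵥ d by simp [R, R', resMap_add_add]]
    exact norm_add_le _ _
  have h₂ : ‖R'.2‖ ≤ ‖R.2‖ + ‖d‖ := by
    rw [show R'.2 = R.2 + -d by simp [R, R', resMap_add_add]]
    exact (norm_add_le _ _).trans_eq (by rw [norm_neg])
  refine max_le ?_ ?_
  · nlinarith [le_max_left ‖R.1‖ ‖R.2‖, norm_nonneg d]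
  · nlinarith [le_max_right ‖R.1‖ ‖R.2‖, norm_nonneg d]

end Residual

theorem stmt13_general (n m : ℕ) (hnn : (Finset.univ : Finset (Fin n)).Nonempty)
    (hmm : (Finset.univ : Finset (Fin m)).Nonempty)
    (P : Matrix (Fin n) (Fin n) ℝ)
    (A : Matrix (Fin m) (Fin n) ℝ) (q : Fin n → ℝ) (b : Fin m → ℝ)
    (xstar : Fin n → ℝ) (sstar zstar : Fin m → ℝ)
    (hs : ∀ i, 0 ≤ sstar i) (hz : ∀ i, 0 ≤ zstar i)
    (hcomp : ∑ i, sstar i * zstar i = 0)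
    (hnd : ∀ i, sstar i ≠ 0 ∨ zstar i ≠ 0) :
    let Rstar := resMap n m P A q b xstar sstar zstar
    let μ0 : ℝ := max ‖Rstar.1‖ ‖Rstar.2‖
    let c : Fin m → ℝ := sstar - zstar
    let s0 : Fin m → ℝ := fun i => (c i + Real.sqrt ((c i) ^ 2 + 4 * μ0)) / 2
    let z0 : Fin m → ℝ := s0 - c
    let R0 := resMap n m P A q b xstar s0 z0
    0 < μ0 →
    max ‖R0.1‖ ‖R0.2‖ ≤
      (1 + ((Finset.univ.sup' hnn fun j => ∑ i, |A i j|) + 1) /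
        (Finset.univ.inf' hmm fun i => |c i|)) * μ0 := by
  intro Rstar μ0 c s0 z0 R0 hμ
  have hcompl : ∀ i, sstar i * zstar i = 0 := fun i =>
    (sum_eq_zero_iff_of_nonneg fun i _ => mul_nonneg (hs i) (hz i)).mp hcomp i (mem_univ i)
  have hc : ∀ i, c i ≠ 0 := fun i =>
    sub_ne_zero_of_mul_eq_zero (hs i) (hz i) (hcompl i) (hnd i)
  set d : Fin m → ℝ := fun i => smoothShift (c i) μ0
  have hs0 : s0 = sstar + d := funext fun i =>
    half_add_sqrt_eq_add_smoothShift (hs i) (hz i) (hcompl i) μ0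
  have hz0 : z0 = zstar + d := by
    rw [show z0 = s0 - c from rfl, hs0]
    ext i; simp only [c, Pi.add_apply, Pi.sub_apply]; ring
  set cmin := univ.inf' hmm fun i => |c i|
  have hcmin : 0 < cmin := (lt_inf'_iff _).mpr fun i _ => abs_pos.mpr (hc i)
  have hd : ‖d‖ ≤ μ0 / cmin := (pi_norm_le_iff_of_nonneg (by positivity)).mpr fun i => by
    rw [Real.norm_eq_abs, abs_of_nonneg (smoothShift_nonneg _ hμ.le)]
    exact (smoothShift_le_div_abs (hc i) hμ.le).trans
      (div_le_div_of_nonneg_left hμ.le hcmin (inf'_le _ (mem_univ i)))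
  have hK := sup'_sum_abs_nonneg hnn A
  calc max ‖R0.1‖ ‖R0.2‖
      ≤ μ0 + ((univ.sup' hnn fun j => ∑ i, |A i j|) + 1) * ‖d‖ := by
        simpa only [R0, hs0, hz0] using residual_norm_add_add_le P A q b xstar sstar zstar d hnn
    _ ≤ μ0 + ((univ.sup' hnn fun j => ∑ i, |A i j|) + 1) * (μ0 / cmin) := by gcongr
    _ = _ := by ring

/-- Theorem 2 for the nonnegative cone: given a complementary, componentwise
nondegenerate pair `(s*, z*) ≥ 0` and `μ⁰ = ‖R(x*, s*, z*)‖_∞ > 0`, the warmstart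
`s⁰ᵢ = (cᵢ + √(cᵢ² + 4μ⁰))/2`, `z⁰ = s⁰ − c` (with `c = s* − z*`), `x⁰ = x*`
satisfies `‖R(x⁰, s⁰, z⁰)‖_∞ ≤ (1 + (‖Aᵀ‖_∞ + 1)/minᵢ|cᵢ|)·μ⁰`, where `‖Aᵀ‖_∞`
is the maximum absolute column sum of `A`, and the `∞`-norm of a residual is the
maximum absolute entry of the concatenated vector (the `max` of the sup norms of
the two blocks). -/
theorem stmt13 (n m : ℕ) (hnn : (Finset.univ : Finset (Fin n)).Nonempty)
    (hmm : (Finset.univ : Finset (Fin m)).Nonempty)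
    (P : Matrix (Fin n) (Fin n) ℝ) (hP : P.PosSemidef)
    (A : Matrix (Fin m) (Fin n) ℝ) (q : Fin n → ℝ) (b : Fin m → ℝ)
    (xstar : Fin n → ℝ) (sstar zstar : Fin m → ℝ)
    (hs : ∀ i, 0 ≤ sstar i) (hz : ∀ i, 0 ≤ zstar i)
    (hcomp : ∑ i, sstar i * zstar i = 0)
    (hnd : ∀ i, sstar i ≠ 0 ∨ zstar i ≠ 0) :
    let Rstar := resMap n m P A q b xstar sstar zstar
    let μ0 : ℝ := max ‖Rstar.1‖ ‖Rstar.2‖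
    let c : Fin m → ℝ := sstar - zstar
    let s0 : Fin m → ℝ := fun i => (c i + Real.sqrt ((c i) ^ 2 + 4 * μ0)) / 2
    let z0 : Fin m → ℝ := s0 - c
    let R0 := resMap n m P A q b xstar s0 z0
    0 < μ0 →
    max ‖R0.1‖ ‖R0.2‖ ≤
      (1 + ((Finset.univ.sup' hnn fun j => ∑ i, |A i j|) + 1) /
        (Finset.univ.inf' hmm fun i => |c i|)) * μ0 :=
  stmt13_general n m hnn hmm P A q b xstar sstar zstar hs hz hcomp hnd
end

section
/- Consider conic optimization with one positive semidefinite block: for symmetric n×n matrices A₁, …, A_k, symmetric B, P ∈ ℝ^{k×k} symmetric positive semidefinite, q ∈ ℝᵏ, define the residual of (x, S, Z) (with x ∈ ℝᵏ and S, Z symmetric n×n) as the pair r_d = Px + (tr(A₁Z), …, tr(A_kZ)) + q and r_p = B − Σᵢ xᵢAᵢ − S, with ‖R‖_∞ the maximum absolute entry over r_d and r_p. Let x* ∈ ℝᵏ and let S*, Z* be symmetric positive semidefinite with S*Z* = 0 and rank(S*) + rank(Z*) = n. Set μ⁰ = ‖R(x*, S*, Z*)‖_∞, assumed positive, let C = S*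 − Z* with eigenvalues d₁, …, dₙ (all nonzero), let S⁰ be the unique symmetric positive definite solution of S − C − μ⁰S⁻¹ = 0, Z⁰ = S⁰ − C, and x⁰ = x*. Then ‖R(x⁰, S⁰, Z⁰)‖_∞ ≤ (1 + (maxᵢ tr|Aᵢ| + 1)/minⱼ |dⱼ|) · μ⁰, where tr|Aᵢ| denotes the sum of the absolute values of the eigenvalues of Aᵢ. -/
/-!
`S⋆` and `Z⋆` are the positive and negative parts of `C = S⋆ - Z⋆`, and `S⁰ = g(C)` for
`g(t) = (t + √(t² + 4μ⁰))/2`, the positive root of `s (s - t) = μ⁰`. So the warmstart moves `S`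
and `Z` by the same matrix `E = g(C) - C⁺`, whose eigenvalues `g(dⱼ) - dⱼ⁺` lie in
`[0, μ⁰/|dⱼ|]`. A matrix with `0 ≤ E ≤ c • 1` has entries bounded by `c` and satisfies
`|tr(A E)| ≤ tr|A| · c`, which bounds the change of both residuals.
-/

open Matrix
open scoped MatrixOrder

noncomputable def smoothPosPart (μ t : ℝ) : ℝ := (t + √(t ^ 2 + 4 * μ)) / 2

section smoothPosPart

variable {μ : ℝ}

lemma abs_le_sqrt_sq_add (hμ : 0 ≤ μ) (t : ℝ) : |t| ≤ √(t ^ 2 + 4 * μ) :=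
  Real.abs_le_sqrt (by linarith)

lemma sq_sqrt_sq_add (hμ : 0 ≤ μ) (t : ℝ) : √(t ^ 2 + 4 * μ) ^ 2 = t ^ 2 + 4 * μ :=
  Real.sq_sqrt (by positivity)

lemma smoothPosPart_sub_mul_self (hμ : 0 ≤ μ) (t : ℝ) :
    (smoothPosPart μ t - t) * smoothPosPart μ t = μ := by
  unfold smoothPosPart
  nlinarith [sq_sqrt_sq_add hμ t]

lemma smoothPosPart_pos (hμ : 0 < μ) (t : ℝ) : 0 < smoothPosPart μ t := by
  have h : |t| < √(t ^ 2 + 4 * μ) := by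
    rw [← Real.sqrt_sq_eq_abs]
    exact Real.sqrt_lt_sqrt (sq_nonneg t) (by linarith)
  unfold smoothPosPart
  linarith [neg_abs_le t]

lemma smoothPosPart_sub_posPart (t : ℝ) :
    smoothPosPart μ t - t⁺ = (√(t ^ 2 + 4 * μ) - |t|) / 2 := by
  unfold smoothPosPart
  rcases le_total t 0 with ht | ht
  · rw [posPart_eq_zero.2 ht, abs_of_nonpos ht]; ring
  · rw [posPart_eq_self.2 ht, abs_of_nonneg ht]; ring

lemma posPart_le_smoothPosPart (hμ : 0 ≤ μ) (t : ℝ) : t⁺ ≤ smoothPosPart μ t := by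
  have := smoothPosPart_sub_posPart (μ := μ) t
  linarith [abs_le_sqrt_sq_add hμ t]

lemma smoothPosPart_sub_posPart_mul_abs_le (hμ : 0 ≤ μ) (t : ℝ) :
    (smoothPosPart μ t - t⁺) * |t| ≤ μ := by
  rw [smoothPosPart_sub_posPart]
  nlinarith [abs_le_sqrt_sq_add hμ t, sq_sqrt_sq_add hμ t, sq_abs t]

end smoothPosPart

namespace Matrix

lemma range_mulVecLin_eq_ker_of_mul_eq_zero_s15 {ι K : Type*} [Fintype ι] [Field K]
    {S Z : Matrix ι ι K} (hSZ : S * Z = 0) (hrank : S.rank + Z.rank = Fintype.card ι) :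
    LinearMap.range Z.mulVecLin = LinearMap.ker S.mulVecLin := by
  refine Submodule.eq_of_le_of_finrank_eq ?_ ?_
  · rintro _ ⟨v, rfl⟩
    simp [mulVec_mulVec, hSZ]
  · have := LinearMap.finrank_range_add_finrank_ker S.mulVecLin
    rw [Module.finrank_fintype_fun_eq_card] at this
    unfold rank at hrank
    omega

lemma diag_le_of_le_smul_one {ι : Type*} [DecidableEq ι] {E : Matrix ι ι ℝ} {c : ℝ}
    (hc : E ≤ c • 1) (i : ι) : E i i ≤ c := by
  simpa using (le_iff.1 hc).diag_nonneg (i := i)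

variable {ι : Type*} [Fintype ι] [DecidableEq ι]

lemma det_sub_ne_zero_of_mul_eq_zero {S Z : Matrix ι ι ℝ} (hS : S.IsSymm) (hZ : Z.IsSymm)
    (hSZ : S * Z = 0) (hrank : S.rank + Z.rank = Fintype.card ι) : (S - Z).det ≠ 0 := by
  rw [Ne, ← exists_mulVec_eq_zero_iff]
  rintro ⟨v, hv0, hv⟩
  have hSZv : S *ᵥ v = Z *ᵥ v := sub_eq_zero.1 (by rwa [sub_mulVec] at hv)
  have hSv : S *ᵥ v = 0 := by
    refine dotProduct_self_eq_zero.1 ?_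
    calc (S *ᵥ v) ⬝ᵥ (S *ᵥ v) = (v ᵥ* S) ⬝ᵥ (Z *ᵥ v) := by
          rw [← mulVec_transpose, hS.eq, ← hSZv]
      _ = 0 := by rw [← dotProduct_mulVec, mulVec_mulVec, hSZ, zero_mulVec, dotProduct_zero]
  obtain ⟨w, hw⟩ : v ∈ LinearMap.range Z.mulVecLin := by
    rw [range_mulVecLin_eq_ker_of_mul_eq_zero_s15 hSZ hrank]
    exact hSv
  refine hv0 (dotProduct_self_eq_zero.1 ?_)
  calc v ⬝ᵥ v = (Z *ᵥ v) ⬝ᵥ w := by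
        rw [← hw, mulVecLin_apply, dotProduct_mulVec, ← mulVec_transpose, hZ.eq]
    _ = 0 := by rw [← hSZv, hSv, zero_dotProduct]

lemma IsHermitian.eigenvalues_ne_zero {C : Matrix ι ι ℝ} (hC : C.IsHermitian)
    (hdet : C.det ≠ 0) (j : ι) : hC.eigenvalues j ≠ 0 := by
  rw [hC.det_eq_prod_eigenvalues] at hdet
  simpa using Finset.prod_ne_zero_iff.1 hdet j (Finset.mem_univ j)

lemma PosSemidef.trace_mul_nonneg {S T : Matrix ι ι ℝ} (hS : S.PosSemidef)
    (hT : T.PosSemidef) : 0 ≤ (S * T).trace := by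
  obtain ⟨B, rfl⟩ := CStarAlgebra.nonneg_iff_eq_star_mul_self.mp hT.nonneg
  rw [star_eq_conjTranspose, ← Matrix.mul_assoc, trace_mul_comm, ← Matrix.mul_assoc]
  exact (hS.mul_mul_conjTranspose_same B).trace_nonneg

/-- With `D = S - T` the hypotheses give `S D T = -μ D`, so `tr(D S D T)`, which is `≥ 0` as the
trace of a product of positive semidefinite matrices, equals `-μ tr(Dᴴ D) ≤ 0`. -/
lemma PosSemidef.eq_of_mul_sub_eq_smul_one {μ : ℝ} (hμ : 0 < μ) {S T C : Matrix ι ι ℝ}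
    (hS : S.PosSemidef) (hT : T.PosSemidef) (hSC : S * (S - C) = μ • 1)
    (hTC : (T - C) * T = μ • 1) : S = T := by
  set D := S - T with hD
  have hDh : Dᴴ = D := (hS.isHermitian.sub hT.isHermitian).eq
  have key : S * D * T = -μ • D := by
    calc S * D * T = S * (S - C) * T - S * ((T - C) * T) := by rw [hD]; noncomm_ring
      _ = -μ • D := by
          rw [hSC, hTC, hD]
          simp only [Matrix.smul_mul, Matrix.mul_smul, Matrix.one_mul, Matrix.mul_one, smul_sub,
            neg_smul]
          abel
  have hnonneg : 0 ≤ (Dᴴ * S * D * T).trace :=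
    (hS.conjTranspose_mul_mul_same D).trace_mul_nonneg hT
  have htr : (Dᴴ * S * D * T).trace = -μ * (Dᴴ * D).trace := by
    rw [hDh, show D * S * D * T = D * (S * D * T) by simp only [Matrix.mul_assoc],
      trace_mul_comm, key, Matrix.smul_mul, trace_smul, smul_eq_mul]
  have hsq : 0 ≤ (Dᴴ * D).trace := (posSemidef_conjTranspose_mul_self D).trace_nonneg
  have hzero : (Dᴴ * D).trace = 0 := by nlinarith
  rw [trace_conjTranspose_mul_self_eq_zero_iff, hD, sub_eq_zero] at hzero
  exact hzero

lemma PosSemidef.two_mul_abs_apply_le {E : Matrix ι ι ℝ} (hE : E.PosSemidef) (i j : ι) :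
    2 * |E i j| ≤ E i i + E j j := by
  have hji : E j i = E i j := by simpa using hE.isHermitian.apply i j
  have key : ∀ s : ℝ, 0 ≤ E i i + 2 * s * E i j + s ^ 2 * E j j := fun s => by
    have := hE.dotProduct_mulVec_nonneg (Pi.single i 1 + Pi.single j s)
    simp [mulVec_add, dotProduct_add, add_dotProduct, hji] at this
    nlinarith
  have hplus := key 1
  have hminus := key (-1)
  rcases abs_cases (E i j) with ⟨h, -⟩ | ⟨h, -⟩ <;> nlinarith

lemma abs_trace_mul_le {A E : Matrix ι ι ℝ} (hA : A.IsHermitian) {c : ℝ}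
    (hE : E ∈ Set.Icc 0 (c • 1)) : |(A * E).trace| ≤ (∑ l, |hA.eigenvalues l|) * c := by
  set U : Matrix ι ι ℝ := (hA.eigenvectorUnitary : Matrix ι ι ℝ)
  set F := star U * E * U
  have hUU : star U * U = 1 := Unitary.coe_star_mul_self _
  have hF0 : 0 ≤ F := star_left_conjugate_nonneg hE.1 U
  have hFc : F ≤ c • 1 := by
    simpa [F, hUU] using star_left_conjugate_le_conjugate hE.2 U
  have htrace : (A * E).trace = ∑ l, hA.eigenvalues l * F l l := by
    calc (A * E).trace = (U * (diagonal hA.eigenvalues * (star U * E))).trace := by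
          conv_lhs => rw [hA.spectral_theorem, Unitary.conjStarAlgAut_apply]
          simp [U, Matrix.mul_assoc]
      _ = (diagonal hA.eigenvalues * F).trace := by
          rw [trace_mul_comm]; simp only [F, Matrix.mul_assoc]
      _ = ∑ l, hA.eigenvalues l * F l l := by simp [trace, diagonal_mul]
  rw [htrace, Finset.sum_mul]
  refine (Finset.abs_sum_le_sum_abs _ _).trans (Finset.sum_le_sum fun l _ => ?_)
  rw [abs_mul, abs_of_nonneg (nonneg_iff_posSemidef.1 hF0).diag_nonneg]
  exact mul_le_mul_of_nonneg_left (diag_le_of_le_smul_one hFc l) (abs_nonneg _)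

end Matrix

section SpectralCalculus

variable {ι : Type*} [Fintype ι] [DecidableEq ι] {C : Matrix ι ι ℝ}

lemma Matrix.IsHermitian.cfc_mem_Icc (hC : C.IsHermitian) {f : ℝ → ℝ} {c : ℝ}
    (hf : ∀ i, f (hC.eigenvalues i) ∈ Set.Icc 0 c) : cfc f C ∈ Set.Icc 0 (c • 1) := by
  have hf' : ∀ x ∈ spectrum ℝ C, f x ∈ Set.Icc 0 c := by
    rw [hC.spectrum_real_eq_range_eigenvalues]
    rintro _ ⟨i, rfl⟩
    exact hf i
  refine ⟨cfc_nonneg fun x hx => (hf' x hx).1, ?_⟩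
  rw [← Algebra.algebraMap_eq_smul_one]
  exact cfc_le_algebraMap f c C (fun x hx => (hf' x hx).2)
    (C.finite_real_spectrum.continuousOn f)

lemma cfc_posPart_sub_eq {S Z : Matrix ι ι ℝ} (hS : 0 ≤ S) (hZ : 0 ≤ Z) (hSZ : S * Z = 0) :
    cfc (·⁺ : ℝ → ℝ) (S - Z) = S := by
  rw [← cfcₙ_eq_cfc, ← CFC.posPart_def]
  exact (CFC.posPart_negPart_unique rfl hSZ hS hZ).1

lemma cfc_smoothPosPart_sub_mul {μ : ℝ} (hμ : 0 ≤ μ) (hC : C.IsHermitian) :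
    (cfc (smoothPosPart μ) C - C) * cfc (smoothPosPart μ) C = μ • 1 := by
  have hC' : IsSelfAdjoint C := hC
  have hfin := C.finite_real_spectrum
  rw [← Algebra.algebraMap_eq_smul_one, ← cfc_const μ C]
  nth_rw 2 [← cfc_id' ℝ C]
  rw [← cfc_sub _ _ _ (hfin.continuousOn _) (hfin.continuousOn _),
    ← cfc_mul _ _ _ (hfin.continuousOn _) (hfin.continuousOn _)]
  simp only [smoothPosPart_sub_mul_self hμ]

lemma eq_cfc_smoothPosPart {μ : ℝ} (hμ : 0 < μ) (hC : C.IsHermitian) {S : Matrix ι ι ℝ}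
    (hS : S.PosDef) (h : S - C - μ • S⁻¹ = 0) : S = cfc (smoothPosPart μ) C := by
  have hSC : S * (S - C) = μ • 1 := by
    rw [sub_eq_zero.1 h, Matrix.mul_smul,
      mul_nonsing_inv _ ((isUnit_iff_isUnit_det S).1 hS.isUnit)]
  have hT : (cfc (smoothPosPart μ) C).PosSemidef :=
    nonneg_iff_posSemidef.1 (cfc_nonneg fun t _ => (smoothPosPart_pos hμ t).le)
  exact hS.posSemidef.eq_of_mul_sub_eq_smul_one hμ hT hSC (cfc_smoothPosPart_sub_mul hμ.le hC)

lemma cfc_smoothPosPart_sub_posPart_mem_Icc {μ δ : ℝ} (hμ : 0 < μ) (hC : C.IsHermitian)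
    (hδ : 0 < δ) (hδC : ∀ i, δ ≤ |hC.eigenvalues i|) :
    cfc (smoothPosPart μ) C - cfc (·⁺ : ℝ → ℝ) C ∈ Set.Icc 0 ((μ / δ) • 1) := by
  have hfin := C.finite_real_spectrum
  rw [← cfc_sub _ _ _ (hfin.continuousOn _) (hfin.continuousOn _)]
  refine hC.cfc_mem_Icc fun i => ⟨sub_nonneg.2 (posPart_le_smoothPosPart hμ.le _), ?_⟩
  rw [le_div_iff₀ hδ]
  calc (smoothPosPart μ (hC.eigenvalues i) - (hC.eigenvalues i)⁺) * δ
      ≤ (smoothPosPart μ (hC.eigenvalues i) - (hC.eigenvalues i)⁺) * |hC.eigenvalues i| :=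
        mul_le_mul_of_nonneg_left (hδC i) (sub_nonneg.2 (posPart_le_smoothPosPart hμ.le _))
    _ ≤ μ := smoothPosPart_sub_posPart_mul_abs_le hμ.le _

end SpectralCalculus

section Residuals

variable {ι : Type*} [Fintype ι] [DecidableEq ι] {E : Matrix ι ι ℝ} {c : ℝ}

lemma norm_entries_le_of_mem_Icc (hc : 0 ≤ c) (hE : E ∈ Set.Icc 0 (c • 1)) :
    ‖fun ij : ι × ι => E ij.1 ij.2‖ ≤ c := by
  refine (pi_norm_le_iff_of_nonneg hc).2 fun ij => ?_
  rw [Real.norm_eq_abs]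
  linarith [(nonneg_iff_posSemidef.1 hE.1).two_mul_abs_apply_le ij.1 ij.2,
    diag_le_of_le_smul_one hE.2 ij.1, diag_le_of_le_smul_one hE.2 ij.2]

lemma norm_trace_mul_le {κ : Type*} [Fintype κ] {A : κ → Matrix ι ι ℝ}
    (hA : ∀ i, (A i).IsHermitian) (hκ : (Finset.univ : Finset κ).Nonempty) (hc : 0 ≤ c)
    (hE : E ∈ Set.Icc 0 (c • 1)) :
    ‖fun i => (A i * E).trace‖ ≤
      (Finset.univ.sup' hκ fun i => ∑ j, |(hA i).eigenvalues j|) * c := by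
  have hsup := fun i => Finset.le_sup' (fun i => ∑ j, |(hA i).eigenvalues j|) (Finset.mem_univ i)
  have hsup0 : 0 ≤ Finset.univ.sup' hκ fun i => ∑ j, |(hA i).eigenvalues j| :=
    (Finset.sum_nonneg fun _ _ => abs_nonneg _).trans (hsup hκ.choose)
  refine (pi_norm_le_iff_of_nonneg (mul_nonneg hsup0 hc)).2 fun i => ?_
  rw [Real.norm_eq_abs]
  exact (abs_trace_mul_le (hA i) hE).trans (mul_le_mul_of_nonneg_right (hsup i) hc)

end Residuals

theorem stmt15_general (n k : ℕ)
    (hk : (Finset.univ : Finset (Fin k)).Nonempty)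
    (hn : (Finset.univ : Finset (Fin n)).Nonempty)
    (A : Fin k → Matrix (Fin n) (Fin n) ℝ) (hA : ∀ i, (A i).IsHermitian)
    (B : Matrix (Fin n) (Fin n) ℝ)
    (P : Matrix (Fin k) (Fin k) ℝ)
    (q : Fin k → ℝ)
    (xstar : Fin k → ℝ) (Sstar Zstar : Matrix (Fin n) (Fin n) ℝ)
    (hS : Sstar.PosSemidef) (hZ : Zstar.PosSemidef) (hSZ : Sstar * Zstar = 0)
    (hrank : Sstar.rank + Zstar.rank = n)
    (μ0 : ℝ)
    (hμ0def : μ0 = max ‖P.mulVec xstar + (fun i => ((A i) * Zstar).trace) + q‖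
      ‖(fun ij : Fin n × Fin n => (B - ∑ i, xstar i • A i - Sstar) ij.1 ij.2)‖)
    (hμ0 : 0 < μ0)
    (C : Matrix (Fin n) (Fin n) ℝ) (hCdef : C = Sstar - Zstar)
    (hCh : C.IsHermitian)
    (S0 : Matrix (Fin n) (Fin n) ℝ) (hS0pd : S0.PosDef)
    (heq : S0 - C - μ0 • S0⁻¹ = 0) :
    let Z0 : Matrix (Fin n) (Fin n) ℝ := S0 - C
    max ‖P.mulVec xstar + (fun i => ((A i) * Z0).trace) + q‖
        ‖(fun ij : Fin n × Fin n => (B - ∑ i, xstar i • A i - S0) ij.1 ij.2)‖ ≤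
      (1 + ((Finset.univ.sup' hk fun i => ∑ j, |(hA i).eigenvalues j|) + 1) /
        (Finset.univ.inf' hn fun j => |hCh.eigenvalues j|)) * μ0 := by
  intro Z0
  set T := Finset.univ.sup' hk fun i => ∑ j, |(hA i).eigenvalues j|
  set δ := Finset.univ.inf' hn fun j => |hCh.eigenvalues j|
  have hdet : C.det ≠ 0 := hCdef ▸ det_sub_ne_zero_of_mul_eq_zero
    (isHermitian_iff_isSymm.1 hS.isHermitian) (isHermitian_iff_isSymm.1 hZ.isHermitian) hSZ
    (by simpa using hrank)
  have hδ : 0 < δ :=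
    (Finset.lt_inf'_iff _).2 fun j _ => abs_pos.2 (hCh.eigenvalues_ne_zero hdet j)
  have hc : 0 ≤ μ0 / δ := by positivity
  have hE : S0 - Sstar ∈ Set.Icc 0 ((μ0 / δ) • 1) := by
    rw [eq_cfc_smoothPosPart hμ0 hCh hS0pd heq, ← cfc_posPart_sub_eq hS.nonneg hZ.nonneg hSZ,
      ← hCdef]
    exact cfc_smoothPosPart_sub_posPart_mem_Icc hμ0 hCh hδ fun j =>
      Finset.inf'_le _ (Finset.mem_univ j)
  have hdual : P *ᵥ xstar + (fun i => (A i * Z0).trace) + q =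
      (P *ᵥ xstar + (fun i => (A i * Zstar).trace) + q) +
        fun i => (A i * (S0 - Sstar)).trace := by
    funext i
    simp only [Z0, hCdef, Pi.add_apply, Matrix.mul_sub, trace_sub]
    ring
  have hprimal : (fun ij : Fin n × Fin n => (B - ∑ i, xstar i • A i - S0) ij.1 ij.2) =
      (fun ij : Fin n × Fin n => (B - ∑ i, xstar i • A i - Sstar) ij.1 ij.2) -
        fun ij => (S0 - Sstar) ij.1 ij.2 := by
    funext ij
    simp only [Pi.sub_apply, Matrix.sub_apply]
    ring
  obtain ⟨hdual_start, hprimal_start⟩ := max_le_iff.1 hμ0def.ge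
  have hrhs : (1 + (T + 1) / δ) * μ0 = μ0 + T * (μ0 / δ) + μ0 / δ := by field_simp; ring
  rw [hdual, hprimal, hrhs]
  refine max_le ((norm_add_le _ _).trans ?_) ((norm_sub_le _ _).trans ?_)
  · linarith [norm_trace_mul_le hA hk hc hE]
  · linarith [norm_entries_le_of_mem_Icc hc hE, norm_trace_mul_le hA hk hc hE,
      norm_nonneg fun i => (A i * (S0 - Sstar)).trace]

/-- Theorem 2 for the positive semidefinite cone. For the conic program with one
PSD block, the residual of `(x, S, Z)` is the pair
`r_d = Px + (tr(A₁Z), …, tr(A_kZ)) + q` and `r_p = B − Σᵢ xᵢAᵢ − S`, and `‖R‖_∞`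
is the maximum absolute entry over `r_d` and `r_p`. Given a complementary pair of
PSD matrices `S*Z* = 0` with `rank S* + rank Z* = n`, `μ⁰ = ‖R(x*, S*, Z*)‖_∞ > 0`,
`C = S* − Z*` (symmetric with all eigenvalues `dⱼ` nonzero), the warmstart `S⁰`
(the unique symmetric positive definite solution of `S − C − μ⁰S⁻¹ = 0`),
`Z⁰ = S⁰ − C`, `x⁰ = x*` satisfies
`‖R(x⁰, S⁰, Z⁰)‖_∞ ≤ (1 + (maxᵢ tr|Aᵢ| + 1)/minⱼ|dⱼ|)·μ⁰`, where `tr|Aᵢ|` is the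
sum of the absolute values of the eigenvalues of the symmetric matrix `Aᵢ`. -/
theorem stmt15 (n k : ℕ)
    (hk : (Finset.univ : Finset (Fin k)).Nonempty)
    (hn : (Finset.univ : Finset (Fin n)).Nonempty)
    (A : Fin k → Matrix (Fin n) (Fin n) ℝ) (hA : ∀ i, (A i).IsHermitian)
    (B : Matrix (Fin n) (Fin n) ℝ) (hB : B.IsSymm)
    (P : Matrix (Fin k) (Fin k) ℝ) (hP : P.PosSemidef)
    (q : Fin k → ℝ)
    (xstar : Fin k → ℝ) (Sstar Zstar : Matrix (Fin n) (Fin n) ℝ)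
    (hS : Sstar.PosSemidef) (hZ : Zstar.PosSemidef) (hSZ : Sstar * Zstar = 0)
    (hrank : Sstar.rank + Zstar.rank = n)
    (μ0 : ℝ)
    (hμ0def : μ0 = max ‖P.mulVec xstar + (fun i => ((A i) * Zstar).trace) + q‖
      ‖(fun ij : Fin n × Fin n => (B - ∑ i, xstar i • A i - Sstar) ij.1 ij.2)‖)
    (hμ0 : 0 < μ0)
    (C : Matrix (Fin n) (Fin n) ℝ) (hCdef : C = Sstar - Zstar)
    (hCh : C.IsHermitian)
    (S0 : Matrix (Fin n) (Fin n) ℝ) (hS0s : S0.IsSymm) (hS0pd : S0.PosDef)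
    (heq : S0 - C - μ0 • S0⁻¹ = 0) :
    let Z0 : Matrix (Fin n) (Fin n) ℝ := S0 - C
    max ‖P.mulVec xstar + (fun i => ((A i) * Z0).trace) + q‖
        ‖(fun ij : Fin n × Fin n => (B - ∑ i, xstar i • A i - S0) ij.1 ij.2)‖ ≤
      (1 + ((Finset.univ.sup' hk fun i => ∑ j, |(hA i).eigenvalues j|) + 1) /
        (Finset.univ.inf' hn fun j => |hCh.eigenvalues j|)) * μ0 :=
  stmt15_general n k hk hn A hA B P q xstar Sstar Zstar hS hZ hSZ hrank μ0 hμ0def hμ0 C hCdef hCh S0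
    hS0pd heq
end
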